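/- arXiv:1211.2974 — 6 statements merged into one kernel-verified Lean document; each statement's English description precedes it below -/
import Mathlib

section
/- Let A be a unital ring, D : A → A an additive map satisfying the Leibniz rule, and k ≥ 1 an integer. For every invertible element a ∈ A one has D^k(a⁻¹) = Σ_{m=1}^{k} (−1)^m Σ_{(k_1,…,k_m)} (k!/(k_1!⋯k_m!)) · (∏_{i=1}^{m} [a⁻¹·D^{k_i}(a)]) · a⁻¹, where the inner sum runs over all m-tuples (k_1,…,k_m) of positive integers with k_1+⋯+k_m = k, and the (non-commutative) product is taken in increasing order of the index i. -/
open Finset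

section
variable {A : Type*} [Ring A]

private lemma D_one (D : A → A) (hmul : ∀ x y : A, D (x * y) = x * D y + D x * y) :
    D 1 = 0 := by
  have h := hmul 1 1
  rw [one_mul, one_mul, mul_one] at h
  exact (left_eq_add.mp h)

private lemma D_sum (D : A → A) (hadd : ∀ x y : A, D (x + y) = D x + D y)
    {ι : Type*} (s : Finset ι) (g : ι → A) :
    D (∑ i ∈ s, g i) = ∑ i ∈ s, D (g i) :=
  map_sum (AddMonoidHom.mk' D hadd) g s

private lemma D_nsmul (D : A → A) (hadd : ∀ x y : A, D (x + y) = D x + D y)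
    (n : ℕ) (x : A) : D (n • x) = n • D x :=
  AddMonoidHom.map_nsmul (AddMonoidHom.mk' D hadd) n x

private lemma D_iter_mul (D : A → A) (hadd : ∀ x y : A, D (x + y) = D x + D y)
    (hmul : ∀ x y : A, D (x * y) = x * D y + D x * y) (n : ℕ) (p q : A) :
    D^[n] (p * q) =
      ∑ k ∈ range n.succ, (n.choose k • (D^[n - k] p * D^[k] q)) := by
  induction n with
  | zero => simp [Finset.range]
  | succ n IH =>
    calc
      D^[n + 1] (p * q) =
          D (∑ k ∈ range n.succ,
              n.choose k • (D^[n - k] p * D^[k] q)) := by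
        rw [Function.iterate_succ_apply', IH]
      _ = (∑ k ∈ range n.succ,
            n.choose k • (D^[n - k + 1] p * D^[k] q)) +
          ∑ k ∈ range n.succ,
            n.choose k • (D^[n - k] p * D^[k + 1] q) := by
        rw [D_sum D hadd]
        simp_rw [D_nsmul D hadd, hmul, Function.iterate_succ_apply',
          smul_add, sum_add_distrib]
        rw [add_comm]
      _ = (∑ k ∈ range n.succ,
                n.choose k.succ • (D^[n - k] p * D^[k + 1] q)) +
              1 • (D^[n + 1] p * D^[0] q) +
            ∑ k ∈ range n.succ, n.choose k • (D^[n - k] p * D^[k + 1] q) :=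
        ?_
      _ = ((∑ k ∈ range n.succ, n.choose k • (D^[n - k] p * D^[k + 1] q)) +
              ∑ k ∈ range n.succ,
                n.choose k.succ • (D^[n - k] p * D^[k + 1] q)) +
            1 • (D^[n + 1] p * D^[0] q) := by
        rw [add_comm, add_assoc]
      _ = (∑ i ∈ range n.succ,
              (n + 1).choose (i + 1) • (D^[n + 1 - (i + 1)] p * D^[i + 1] q)) +
            1 • (D^[n + 1] p * D^[0] q) := by
        simp_rw [Nat.choose_succ_succ, Nat.succ_sub_succ, add_smul, sum_add_distrib]
      _ = ∑ k ∈ range n.succ.succ,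
            n.succ.choose k • (D^[n.succ - k] p * D^[k] q) := by
        rw [sum_range_succ' _ n.succ, Nat.choose_zero_right, tsub_zero]
    congr
    refine (sum_range_succ' _ _).trans (congr_arg₂ (· + ·) ?_ ?_)
    · rw [sum_range_succ, Nat.choose_succ_self, zero_smul, add_zero]
      refine sum_congr rfl fun k hk => ?_
      rw [mem_range] at hk
      congr
      omega
    · rw [Nat.choose_zero_right, tsub_zero]



private lemma C_empty_of_lt (m j : ℕ) (h : j < m) :
    (Finset.Nat.antidiagonalTuple m j).filter (fun f => ∀ i, 0 < f i) = ∅ := by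
  ext f
  simp only [mem_filter, Finset.Nat.mem_antidiagonalTuple, Finset.notMem_empty, iff_false,
    not_and]
  intro hs hp
  have hm : (m : ℕ) ≤ ∑ i, f i := by
    calc (m : ℕ) = ∑ _i : Fin m, 1 := by simp
    _ ≤ ∑ i, f i := Finset.sum_le_sum (fun i _ => hp i)
  omega

private lemma sum_C_succ {M : Type*} [AddCommMonoid M] (m n : ℕ) (F : (Fin (m + 1) → ℕ) → M) :
    ∑ f ∈ (Finset.Nat.antidiagonalTuple (m + 1) n).filter (fun f => ∀ i, 0 < f i), F f
      = ∑ j ∈ Finset.range n,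
          ∑ g ∈ (Finset.Nat.antidiagonalTuple m j).filter (fun g => ∀ i, 0 < g i),
            F (Fin.cons (n - j) g) := by
  rw [← Finset.sum_sigma ((Finset.range n))
    (fun j => (Finset.Nat.antidiagonalTuple m j).filter (fun g => ∀ i, 0 < g i))
    (fun p => F (Fin.cons (n - p.1) p.2))]
  refine Finset.sum_nbij' (fun f => ⟨∑ i, Fin.tail f i, Fin.tail f⟩)
    (fun p => Fin.cons (n - p.1) p.2) ?_ ?_ ?_ ?_ ?_
  · intro f hf
    simp only [mem_filter, Finset.Nat.mem_antidiagonalTuple] at hf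
    obtain ⟨hs, hp⟩ := hf
    rw [Fin.sum_univ_succ] at hs
    have h0 : 0 < f 0 := hp 0
    have hts : ∑ i : Fin m, Fin.tail f i = ∑ i : Fin m, f i.succ := rfl
    simp only [Finset.mem_sigma, Finset.mem_range, mem_filter,
      Finset.Nat.mem_antidiagonalTuple]
    exact ⟨by omega, trivial, fun i => hp i.succ⟩
  · rintro ⟨j, g⟩ hp
    simp only [Finset.mem_sigma, Finset.mem_range, mem_filter,
      Finset.Nat.mem_antidiagonalTuple] at hp
    obtain ⟨hj, hs, hpos⟩ := hp
    simp only [mem_filter, Finset.Nat.mem_antidiagonalTuple]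
    constructor
    · rw [Fin.sum_univ_succ]
      simp only [Fin.cons_zero, Fin.cons_succ]
      omega
    · intro i
      refine Fin.cases ?_ ?_ i
      · simpa using Nat.sub_pos_of_lt hj
      · intro i; simpa using hpos i
  · intro f hf
    simp only [mem_filter, Finset.Nat.mem_antidiagonalTuple] at hf
    obtain ⟨hs, hp⟩ := hf
    rw [Fin.sum_univ_succ] at hs
    have hts : ∑ i : Fin m, Fin.tail f i = ∑ i : Fin m, f i.succ := rfl
    dsimp only
    have h1 : n - ∑ i : Fin m, Fin.tail f i = f 0 := by omega
    rw [h1, Fin.cons_self_tail]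
  · rintro ⟨j, g⟩ hp
    simp only [Finset.mem_sigma, Finset.mem_range, mem_filter,
      Finset.Nat.mem_antidiagonalTuple] at hp
    obtain ⟨hj, hs, hpos⟩ := hp
    dsimp only
    simp [hs]
  · intro f hf
    simp only [mem_filter, Finset.Nat.mem_antidiagonalTuple] at hf
    obtain ⟨hs, hp⟩ := hf
    rw [Fin.sum_univ_succ] at hs
    have hts : ∑ i : Fin m, Fin.tail f i = ∑ i : Fin m, f i.succ := rfl
    dsimp only
    have h1 : n - ∑ i : Fin m, Fin.tail f i = f 0 := by omega
    rw [h1, Fin.cons_self_tail]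

private lemma multinomial_fin_cons (m c : ℕ) (g : Fin m → ℕ) :
    Nat.multinomial Finset.univ (Fin.cons c g)
      = (c + ∑ i, g i).choose c * Nat.multinomial Finset.univ g := by
  rw [Fin.univ_succ, Nat.multinomial_cons]
  simp only [Fin.cons_zero, Finset.sum_map, Function.Embedding.coeFn_mk, Fin.cons_succ]
  congr 1
  unfold Nat.multinomial
  rw [Finset.sum_map, Finset.prod_map]
  simp [Fin.cons_succ]

private lemma C_empty_of_lt' (m j : ℕ) (h : j < m) :
    (Finset.Nat.antidiagonalTuple m j).filter (fun f => ∀ i, 0 < f i) = ∅ := by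
  ext f
  simp only [mem_filter, Finset.Nat.mem_antidiagonalTuple, Finset.notMem_empty, iff_false,
    not_and]
  intro hs hp
  have hm : (m : ℕ) ≤ ∑ i, f i := by
    calc (m : ℕ) = ∑ _i : Fin m, 1 := by simp
    _ ≤ ∑ i, f i := Finset.sum_le_sum (fun i _ => hp i)
  omega

private def Tm (D : A → A) (a : Aˣ) (i j : ℕ) : A :=
  ∑ g ∈ (Finset.Nat.antidiagonalTuple i j).filter (fun g => ∀ t, 0 < g t),
    (Nat.multinomial Finset.univ g : A) *
      ((List.ofFn fun t : Fin i => (↑a⁻¹ : A) * D^[g t] (↑a : A)).prod * (↑a⁻¹ : A))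

private def rhsF (D : A → A) (a : Aˣ) : ℕ → A
  | 0 => (↑a⁻¹ : A)
  | (k + 1) => ∑ m ∈ Finset.Icc 1 (k + 1), (-1 : A) ^ m * Tm D a m (k + 1)

private lemma Tm_eq_zero (D : A → A) (a : Aˣ) {i j : ℕ} (h : j < i) : Tm D a i j = 0 := by
  rw [Tm, C_empty_of_lt' i j h, Finset.sum_empty]

private lemma Tm_zero_succ (D : A → A) (a : Aˣ) (j : ℕ) : Tm D a 0 (j + 1) = 0 := by
  rw [Tm, Finset.Nat.antidiagonalTuple_zero_succ, Finset.filter_empty, Finset.sum_empty]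

private lemma Tm_zero_zero (D : A → A) (a : Aˣ) : Tm D a 0 0 = (↑a⁻¹ : A) := by
  rw [Tm, Finset.Nat.antidiagonalTuple_zero_zero]
  rw [Finset.filter_true_of_mem (by intro x _; intro i; exact i.elim0)]
  simp [List.ofFn_zero]

private lemma rhsF_eq_sum (D : A → A) (a : Aˣ) {n j : ℕ} (hj : j < n) :
    rhsF D a j = ∑ i ∈ Finset.range n, (-1 : A) ^ i * Tm D a i j := by
  match j with
  | 0 =>
    rw [Finset.sum_eq_single_of_mem 0 (Finset.mem_range.mpr hj)]
    · simp [rhsF, Tm_zero_zero]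
    · intro i _ hi
      rw [Tm_eq_zero D a (Nat.pos_of_ne_zero hi), mul_zero]
  | (j' + 1) =>
    rw [rhsF]
    refine Finset.sum_subset ?_ ?_
    · intro x hx
      simp only [Finset.mem_Icc] at hx
      simp only [Finset.mem_range]
      omega
    · intro i _ hni
      simp only [Finset.mem_Icc, not_and, not_le] at hni
      match i with
      | 0 => rw [Tm_zero_succ, mul_zero]
      | (i' + 1) =>
        rw [Tm_eq_zero D a (by have := hni (by omega); omega), mul_zero]

private lemma Tm_succ_cons (D : A → A) (a : Aˣ) (i n j : ℕ) (hj : j < n) :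
    (∑ g ∈ (Finset.Nat.antidiagonalTuple i j).filter (fun g => ∀ t, 0 < g t),
        (Nat.multinomial Finset.univ (Fin.cons (n - j) g) : A) *
          ((List.ofFn fun t : Fin (i + 1) =>
              (↑a⁻¹ : A) * D^[(Fin.cons (n - j) g : Fin (i+1) → ℕ) t] (↑a : A)).prod
            * (↑a⁻¹ : A)))
      = ((n.choose j : A) * ((↑a⁻¹ : A) * D^[n - j] (↑a : A))) * Tm D a i j := by
  rw [Tm, Finset.mul_sum]
  refine Finset.sum_congr rfl ?_
  intro g hg
  simp only [mem_filter, Finset.Nat.mem_antidiagonalTuple] at hg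
  obtain ⟨hs, hpos⟩ := hg
  have hmult : Nat.multinomial Finset.univ (Fin.cons (n - j) g)
      = n.choose j * Nat.multinomial Finset.univ g := by
    rw [show Nat.multinomial Finset.univ (Fin.cons (n - j) g)
        = ((n - j) + ∑ t, g t).choose (n - j) * Nat.multinomial Finset.univ g from ?_]
    · rw [hs, Nat.sub_add_cancel hj.le, Nat.choose_symm hj.le]
    · rw [Fin.univ_succ, Nat.multinomial_cons]
      simp only [Fin.cons_zero, Finset.sum_map, Function.Embedding.coeFn_mk, Fin.cons_succ]
      congr 1
      unfold Nat.multinomial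
      rw [Finset.sum_map, Finset.prod_map]
      simp [Fin.cons_succ]
  have hprod : (List.ofFn fun t : Fin (i + 1) =>
        (↑a⁻¹ : A) * D^[(Fin.cons (n - j) g : Fin (i+1) → ℕ) t] (↑a : A)).prod
      = ((↑a⁻¹ : A) * D^[n - j] (↑a : A)) *
        (List.ofFn fun t : Fin i => (↑a⁻¹ : A) * D^[g t] (↑a : A)).prod := by
    rw [List.ofFn_succ]
    simp only [Fin.cons_zero, Fin.cons_succ, List.prod_cons]
  rw [hmult, hprod, Nat.cast_mul]
  simp only [mul_assoc]
  congr 1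
  calc (Nat.multinomial Finset.univ g : A) *
        ((↑a⁻¹ : A) * (D^[n - j] (↑a : A) *
          ((List.ofFn fun t : Fin i => (↑a⁻¹ : A) * D^[g t] (↑a : A)).prod * (↑a⁻¹ : A))))
      = (↑a⁻¹ : A) * ((Nat.multinomial Finset.univ g : A) * (D^[n - j] (↑a : A) *
          ((List.ofFn fun t : Fin i => (↑a⁻¹ : A) * D^[g t] (↑a : A)).prod * (↑a⁻¹ : A)))) :=
      (Nat.cast_commute _ _).left_comm _
    _ = (↑a⁻¹ : A) * (D^[n - j] (↑a : A) * ((Nat.multinomial Finset.univ g : A) *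
          ((List.ofFn fun t : Fin i => (↑a⁻¹ : A) * D^[g t] (↑a : A)).prod * (↑a⁻¹ : A)))) :=
      congrArg _ ((Nat.cast_commute _ _).left_comm _)

private lemma rhsF_rec (D : A → A) (a : Aˣ) (k : ℕ) :
    rhsF D a (k + 1) = -∑ j ∈ Finset.range (k + 1),
      (k + 1).choose j • ((↑a⁻¹ : A) * D^[k + 1 - j] (↑a : A) * rhsF D a j) := by
  have step : ∀ ℓ, Tm D a (1 + ℓ) (k + 1)
      = ∑ j ∈ Finset.range (k + 1),
          (((k + 1).choose j : A) * ((↑a⁻¹ : A) * D^[k + 1 - j] (↑a : A))) * Tm D a ℓ j := by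
    intro ℓ
    rw [Nat.add_comm 1 ℓ, Tm,
      sum_C_succ ℓ (k + 1) (fun f => (Nat.multinomial Finset.univ f : A) *
        ((List.ofFn fun t : Fin (ℓ + 1) => (↑a⁻¹ : A) * D^[f t] (↑a : A)).prod * (↑a⁻¹ : A)))]
    exact Finset.sum_congr rfl (fun j hj => Tm_succ_cons D a ℓ (k + 1) j (Finset.mem_range.mp hj))
  have colj : ∀ j ∈ Finset.range (k + 1),
      ∑ ℓ ∈ Finset.range (k + 1), (-1 : A) ^ (1 + ℓ) *
          ((((k + 1).choose j : A) * ((↑a⁻¹ : A) * D^[k + 1 - j] (↑a : A))) * Tm D a ℓ j)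
        = -((k + 1).choose j • ((↑a⁻¹ : A) * D^[k + 1 - j] (↑a : A) * rhsF D a j)) := by
    intro j hj
    have hjlt := Finset.mem_range.mp hj
    calc ∑ ℓ ∈ Finset.range (k + 1), (-1 : A) ^ (1 + ℓ) *
          ((((k + 1).choose j : A) * ((↑a⁻¹ : A) * D^[k + 1 - j] (↑a : A))) * Tm D a ℓ j)
        = ∑ ℓ ∈ Finset.range (k + 1),
            -(((k + 1).choose j : A) * (((↑a⁻¹ : A) * D^[k + 1 - j] (↑a : A)) *
              ((-1 : A) ^ ℓ * Tm D a ℓ j))) := by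
          refine Finset.sum_congr rfl (fun ℓ _ => ?_)
          rw [pow_add, pow_one, mul_assoc, neg_one_mul]
          congr 1
          rw [((Commute.neg_one_left _).pow_left ℓ).left_comm, mul_assoc]
      _ = -(((k + 1).choose j : A) * (((↑a⁻¹ : A) * D^[k + 1 - j] (↑a : A)) *
              ∑ ℓ ∈ Finset.range (k + 1), (-1 : A) ^ ℓ * Tm D a ℓ j)) := by
          rw [Finset.sum_neg_distrib, ← Finset.mul_sum, ← Finset.mul_sum]
      _ = -((k + 1).choose j • ((↑a⁻¹ : A) * D^[k + 1 - j] (↑a : A) * rhsF D a j)) := by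
          rw [← rhsF_eq_sum D a hjlt, nsmul_eq_mul, mul_assoc]
  calc rhsF D a (k + 1) = ∑ m ∈ Finset.Icc 1 (k + 1), (-1 : A) ^ m * Tm D a m (k + 1) := rfl
    _ = ∑ ℓ ∈ Finset.range (k + 1), (-1 : A) ^ (1 + ℓ) * Tm D a (1 + ℓ) (k + 1) := by
        rw [← Finset.Ico_add_one_right_eq_Icc, Finset.sum_Ico_eq_sum_range]
        simp only [Nat.add_sub_cancel]
    _ = ∑ ℓ ∈ Finset.range (k + 1), ∑ j ∈ Finset.range (k + 1), (-1 : A) ^ (1 + ℓ) *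
          ((((k + 1).choose j : A) * ((↑a⁻¹ : A) * D^[k + 1 - j] (↑a : A))) * Tm D a ℓ j) := by
        refine Finset.sum_congr rfl (fun ℓ _ => ?_)
        rw [step ℓ, Finset.mul_sum]
    _ = ∑ j ∈ Finset.range (k + 1), ∑ ℓ ∈ Finset.range (k + 1), (-1 : A) ^ (1 + ℓ) *
          ((((k + 1).choose j : A) * ((↑a⁻¹ : A) * D^[k + 1 - j] (↑a : A))) * Tm D a ℓ j) :=
        Finset.sum_comm
    _ = ∑ j ∈ Finset.range (k + 1),
          -((k + 1).choose j • ((↑a⁻¹ : A) * D^[k + 1 - j] (↑a : A) * rhsF D a j)) :=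
        Finset.sum_congr rfl colj
    _ = -∑ j ∈ Finset.range (k + 1),
          (k + 1).choose j • ((↑a⁻¹ : A) * D^[k + 1 - j] (↑a : A) * rhsF D a j) :=
        Finset.sum_neg_distrib _


private lemma D_iter_inv (D : A → A) (hadd : ∀ x y : A, D (x + y) = D x + D y)
    (hmul : ∀ x y : A, D (x * y) = x * D y + D x * y) (a : Aˣ) :
    ∀ n, D^[n] (↑a⁻¹ : A) = rhsF D a n := by
  intro n
  induction n using Nat.strong_induction_on with
  | _ n IH =>
  rcases n with _ | k
  · simp [rhsF]
  · have hone : D^[k + 1] ((1 : A)) = 0 := by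
      rw [Function.iterate_succ_apply, D_one D hmul]
      have h0 : D (0 : A) = 0 := by have := hadd 0 0; simpa using this.symm
      exact Function.iterate_fixed h0 k
    have hmain := D_iter_mul D hadd hmul (k + 1) (↑a : A) (↑a⁻¹ : A)
    rw [Units.mul_inv, hone, Finset.sum_range_succ] at hmain
    simp only [Nat.choose_self, one_smul, Nat.sub_self, Function.iterate_zero, id_eq] at hmain
    calc D^[k + 1] (↑a⁻¹ : A)
        = (↑a⁻¹ : A) * ((↑a : A) * D^[k + 1] (↑a⁻¹ : A)) := by
          rw [← mul_assoc, Units.inv_mul, one_mul]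
      _ = (↑a⁻¹ : A) * (-∑ t ∈ Finset.range (k + 1),
            (k + 1).choose t • (D^[k + 1 - t] (↑a : A) * D^[t] (↑a⁻¹ : A))) := by
          rw [eq_neg_of_add_eq_zero_right hmain.symm]
      _ = -∑ t ∈ Finset.range (k + 1),
            (k + 1).choose t • ((↑a⁻¹ : A) * D^[k + 1 - t] (↑a : A) * rhsF D a t) := by
          rw [mul_neg, Finset.mul_sum]
          congr 1
          refine Finset.sum_congr rfl (fun t ht => ?_)
          rw [mul_smul_comm, IH t (Finset.mem_range.mp ht), ← mul_assoc]
      _ = rhsF D a (k + 1) := (rhsF_rec D a k).symm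

end

/-- **Iterated quotient rule for derivations.**
Let `A` be a unital ring, `D : A → A` an additive map satisfying the Leibniz rule,
and `k ≥ 1`. For every invertible `a ∈ A`,
`D^k(a⁻¹) = Σ_{m=1}^{k} (−1)^m Σ_{(k_1,…,k_m)} (k!/(k_1!⋯k_m!)) ·
  (∏_{i=1}^{m} [a⁻¹ · D^{k_i}(a)]) · a⁻¹`,
where the inner sum runs over all `m`-tuples of positive integers summing to `k`,
and the non-commutative product is taken in increasing order of the index. -/
theorem iterated_quotient_rule_derivation {A : Type*} [Ring A]
    (D : A → A)
    (hadd : ∀ x y : A, D (x + y) = D x + D y)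
    (hmul : ∀ x y : A, D (x * y) = x * D y + D x * y)
    (k : ℕ) (hk : 1 ≤ k) (a : Aˣ) :
    D^[k] (↑a⁻¹ : A) =
      ∑ m ∈ Finset.Icc 1 k, (-1 : A) ^ m *
        ∑ f ∈ (Finset.Nat.antidiagonalTuple m k).filter (fun f => ∀ i, 0 < f i),
          (Nat.multinomial Finset.univ f : A) *
            ((List.ofFn fun i : Fin m => (↑a⁻¹ : A) * D^[f i] (↑a : A)).prod
              * (↑a⁻¹ : A)) := by
  obtain ⟨k', rfl⟩ : ∃ k', k = k' + 1 := ⟨k - 1, by omega⟩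
  rw [D_iter_inv D hadd hmul a (k' + 1)]
  rfl
end

section
/- Let A be a unital Banach algebra, D : A → A an additive map satisfying the Leibniz rule, k ≥ 1 an integer, and write |x|_k = Σ_{m=1}^{k} ‖D^m(x)‖/m!. Then for every invertible a ∈ A one has |a⁻¹|_k ≤ Σ_{n=1}^{k} ‖a⁻¹‖^{n+1}·|a|_k^{n} = ‖a⁻¹‖²·|a|_k · Σ_{n=0}^{k−1} (‖a⁻¹‖·|a|_k)^{n}. -/
theorem myLeibniz {A : Type*} [Ring A] (D : A → A)
    (hadd : ∀ x y : A, D (x + y) = D x + D y)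
    (hmul : ∀ x y : A, D (x * y) = x * D y + D x * y)
    (m : ℕ) (x y : A) :
    D^[m] (x * y) = ∑ j ∈ Finset.range (m + 1),
      m.choose j • (D^[j] x * D^[m - j] y) := by
  have hD : ∀ (s : Finset ℕ) (f : ℕ → A), D (∑ j ∈ s, f j) = ∑ j ∈ s, D (f j) :=
    fun s f => map_sum (AddMonoidHom.mk' D hadd) f s
  have hn : ∀ (n : ℕ) (z : A), D (n • z) = n • D z :=
    fun n z => map_nsmul (AddMonoidHom.mk' D hadd) n z
  induction m with
  | zero => simp
  | succ m ih =>
    rw [Function.iterate_succ_apply', ih, hD]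
    simp_rw [hn, hmul, smul_add, Finset.sum_add_distrib]
    have h1 : ∀ j (z : A), D (D^[j] z) = D^[j+1] z := fun j z =>
      (Function.iterate_succ_apply' D j z).symm
    simp_rw [h1]
    have hA1 : ∑ j ∈ Finset.range (m+1), m.choose j • (D^[j] x * D^[m - j + 1] y)
        = x * D^[m+1] y + ∑ j ∈ Finset.range m, m.choose (j+1) • (D^[j+1] x * D^[m - j] y) := by
      rw [Finset.sum_range_succ' (fun j => m.choose j • (D^[j] x * D^[m - j + 1] y)) m]
      simp only [Nat.choose_zero_right, one_smul, Function.iterate_zero_apply, Nat.sub_zero]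
      rw [add_comm]
      congr 1
      refine Finset.sum_congr rfl fun j hj => ?_
      have : m - (j+1) + 1 = m - j := by
        have := Finset.mem_range.mp hj; omega
      rw [this]
    have hA2 : ∑ j ∈ Finset.range (m+1), m.choose j • (D^[j+1] x * D^[m - j] y)
        = (∑ j ∈ Finset.range m, m.choose j • (D^[j+1] x * D^[m - j] y)) + D^[m+1] x * y := by
      rw [Finset.sum_range_succ]
      simp
    have hR : ∑ j ∈ Finset.range (m+2), (m+1).choose j • (D^[j] x * D^[m + 1 - j] y)
        = x * D^[m+1] y + ((∑ j ∈ Finset.range m, (m+1).choose (j+1) • (D^[j+1] x * D^[m - j] y)) + D^[m+1] x * y) := by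
      rw [Finset.sum_range_succ' (fun j => (m+1).choose j • (D^[j] x * D^[m + 1 - j] y)) (m+1)]
      simp only [Nat.choose_zero_right, one_smul, Function.iterate_zero_apply, Nat.sub_zero]
      rw [add_comm]
      congr 1
      rw [Finset.sum_range_succ]
      simp only [Nat.choose_self, one_smul, Nat.sub_self, Function.iterate_zero_apply]
      congr 1
      refine Finset.sum_congr rfl fun j hj => ?_
      have : m + 1 - (j+1) = m - j := by omega
      rw [this]
    rw [hA1, hA2, hR]
    have pascal : ∀ j : ℕ, (m+1).choose (j+1) • (D^[j+1] x * D^[m - j] y)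
        = m.choose (j+1) • (D^[j+1] x * D^[m - j] y) + m.choose j • (D^[j+1] x * D^[m - j] y) := by
      intro j
      rw [Nat.choose_succ_succ m j, add_smul, add_comm]
    simp_rw [pascal, Finset.sum_add_distrib]
    abel


/-- **Norm control in the domain of a power of a derivation.**
Let `A` be a unital Banach algebra, `D : A → A` an additive map satisfying the
Leibniz rule, `k ≥ 1`, and write `|x|_k = Σ_{m=1}^{k} ‖D^m(x)‖/m!`. Then for every
invertible `a ∈ A`,
`|a⁻¹|_k ≤ Σ_{n=1}^{k} ‖a⁻¹‖^{n+1}·|a|_k^{n}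
        = ‖a⁻¹‖²·|a|_k · Σ_{n=0}^{k−1} (‖a⁻¹‖·|a|_k)^{n}`. -/
theorem nci_domain_derivation_power {A : Type*} [NormedRing A] [CompleteSpace A]
    (D : A → A)
    (hadd : ∀ x y : A, D (x + y) = D x + D y)
    (hmul : ∀ x y : A, D (x * y) = x * D y + D x * y)
    (k : ℕ) (hk : 1 ≤ k) (a : Aˣ)
    (S : ℝ) (hS : S = ∑ m ∈ Finset.Icc 1 k, ‖D^[m] (↑a : A)‖ / (m.factorial : ℝ)) :
    (∑ m ∈ Finset.Icc 1 k, ‖D^[m] (↑a⁻¹ : A)‖ / (m.factorial : ℝ)) ≤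
        ∑ n ∈ Finset.Icc 1 k, ‖(↑a⁻¹ : A)‖ ^ (n + 1) * S ^ n
      ∧ (∑ n ∈ Finset.Icc 1 k, ‖(↑a⁻¹ : A)‖ ^ (n + 1) * S ^ n)
          = ‖(↑a⁻¹ : A)‖ ^ 2 * S * ∑ n ∈ Finset.range k, (‖(↑a⁻¹ : A)‖ * S) ^ n := by
  set c : ℝ := ‖(↑a⁻¹ : A)‖ with hc
  set b : ℕ → ℝ := fun m => ‖D^[m] (↑a⁻¹ : A)‖ / (m.factorial : ℝ) with hbdef
  set s : ℕ → ℝ := fun m => ‖D^[m] (↑a : A)‖ / (m.factorial : ℝ) with hsdef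
  have hb0 : b 0 = c := by simp [hbdef, hc]
  have hbnn : ∀ m, 0 ≤ b m := fun m => by
    simp only [hbdef]; positivity
  have hsnn : ∀ m, 0 ≤ s m := fun m => by
    simp only [hsdef]; positivity
  have hcnn : 0 ≤ c := norm_nonneg _
  have hSs : S = ∑ j ∈ Finset.range k, s (j + 1) := by
    rw [hS, ← Finset.Ico_add_one_right_eq_Icc, Finset.sum_Ico_eq_sum_range]
    exact Finset.sum_congr rfl fun j _ => by rw [add_comm]
  have hSnn : 0 ≤ S := by
    rw [hSs]; exact Finset.sum_nonneg fun j _ => hsnn _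
  have hSle : ∀ m, m ≤ k → ∑ j ∈ Finset.range m, s (j + 1) ≤ S := by
    intro m hm
    rw [hSs]
    exact Finset.sum_le_sum_of_subset_of_nonneg
      (Finset.range_subset_range.mpr hm) (fun j _ _ => hsnn _)
  -- D kills 0 and 1, and iterates kill 1
  have hD0 : D 0 = 0 := by simpa using hadd 0 0
  have hD1 : D 1 = 0 := by simpa using hmul 1 1
  have hDiter0 : ∀ m, D^[m] (0 : A) = 0 := by
    intro m
    induction m with
    | zero => simp
    | succ m ih => rw [Function.iterate_succ_apply', ih, hD0]
  have hDiter1 : ∀ m, 1 ≤ m → D^[m] (1 : A) = 0 := by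
    intro m hm
    obtain ⟨t, rfl⟩ := Nat.exists_eq_add_of_le hm
    rw [add_comm, Function.iterate_succ_apply, hD1, hDiter0]
  -- the key norm recurrence
  have key : ∀ t : ℕ, ‖D^[t+1] (↑a⁻¹ : A)‖ ≤
      c * ∑ j ∈ Finset.range (t+1),
        ((t+1).choose (j+1) : ℝ) * ‖D^[j+1] (↑a : A)‖ * ‖D^[t-j] (↑a⁻¹ : A)‖ := by
    intro t
    have hL := myLeibniz D hadd hmul (t+1) (↑a : A) (↑a⁻¹ : A)
    rw [Units.mul_inv, hDiter1 (t+1) (by omega)] at hL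
    rw [Finset.sum_range_succ'
      (fun j => (t+1).choose j • (D^[j] (↑a : A) * D^[t + 1 - j] (↑a⁻¹ : A))) (t+1)] at hL
    simp only [Nat.choose_zero_right, one_smul, Function.iterate_zero_apply, Nat.sub_zero] at hL
    have hsolve : (↑a : A) * D^[t+1] (↑a⁻¹ : A)
        = - ∑ j ∈ Finset.range (t+1),
            (t+1).choose (j+1) • (D^[j+1] (↑a : A) * D^[t + 1 - (j+1)] (↑a⁻¹ : A)) := by
      linear_combination (norm := abel) hL.symm
    have hrec : D^[t+1] (↑a⁻¹ : A)
        = (↑a⁻¹ : A) * ((↑a : A) * D^[t+1] (↑a⁻¹ : A)) := by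
      rw [← mul_assoc, Units.inv_mul, one_mul]
    calc ‖D^[t+1] (↑a⁻¹ : A)‖
        = ‖(↑a⁻¹ : A) * ((↑a : A) * D^[t+1] (↑a⁻¹ : A))‖ := by rw [← hrec]
      _ ≤ c * ‖(↑a : A) * D^[t+1] (↑a⁻¹ : A)‖ := norm_mul_le _ _
      _ ≤ c * ∑ j ∈ Finset.range (t+1),
            ((t+1).choose (j+1) : ℝ) * ‖D^[j+1] (↑a : A)‖ * ‖D^[t-j] (↑a⁻¹ : A)‖ := by
          apply mul_le_mul_of_nonneg_left _ hcnn
          rw [hsolve, norm_neg]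
          refine le_trans (norm_sum_le _ _) (Finset.sum_le_sum fun j hj => ?_)
          have hj' : t + 1 - (j+1) = t - j := by omega
          rw [hj']
          calc ‖(t+1).choose (j+1) • (D^[j+1] (↑a : A) * D^[t - j] (↑a⁻¹ : A))‖
              ≤ ((t+1).choose (j+1) : ℝ) * ‖D^[j+1] (↑a : A) * D^[t - j] (↑a⁻¹ : A)‖ :=
                norm_nsmul_le
            _ ≤ ((t+1).choose (j+1) : ℝ) * (‖D^[j+1] (↑a : A)‖ * ‖D^[t - j] (↑a⁻¹ : A)‖) :=
                mul_le_mul_of_nonneg_left (norm_mul_le _ _) (by positivity)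
            _ = ((t+1).choose (j+1) : ℝ) * ‖D^[j+1] (↑a : A)‖ * ‖D^[t - j] (↑a⁻¹ : A)‖ := by
                ring
  -- recurrence for b
  have brec : ∀ t : ℕ, b (t+1) ≤ c * ∑ j ∈ Finset.range (t+1), s (j+1) * b (t - j) := by
    intro t
    have hfac : (0:ℝ) < ((t+1).factorial : ℝ) := by positivity
    have h1 : b (t+1) = ‖D^[t+1] (↑a⁻¹ : A)‖ / ((t+1).factorial : ℝ) := rfl
    rw [h1, div_le_iff₀ hfac]
    refine le_trans (key t) ?_
    have heq : ∀ j ∈ Finset.range (t+1),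
        ((t+1).choose (j+1) : ℝ) * ‖D^[j+1] (↑a : A)‖ * ‖D^[t-j] (↑a⁻¹ : A)‖
          = s (j+1) * b (t-j) * ((t+1).factorial : ℝ) := by
      intro j hj
      have hjr := Finset.mem_range.mp hj
      have hjt : j + 1 ≤ t + 1 := by omega
      have hsub : t + 1 - (j + 1) = t - j := by omega
      have hfacN : (t+1).choose (j+1) * (j+1).factorial * (t-j).factorial
          = (t+1).factorial := by
        rw [← hsub]
        exact Nat.choose_mul_factorial_mul_factorial hjt
      have hfacR : ((t+1).choose (j+1) : ℝ) * ((j+1).factorial : ℝ) * ((t-j).factorial : ℝ)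
          = ((t+1).factorial : ℝ) := by exact_mod_cast congrArg (Nat.cast (R := ℝ)) hfacN
      have hs1 : s (j+1) = ‖D^[j+1] (↑a : A)‖ / ((j+1).factorial : ℝ) := rfl
      have hb1 : b (t-j) = ‖D^[t-j] (↑a⁻¹ : A)‖ / ((t-j).factorial : ℝ) := rfl
      rw [hs1, hb1, ← hfacR]
      have hf1 : ((j+1).factorial : ℝ) ≠ 0 := by positivity
      have hf2 : ((t-j).factorial : ℝ) ≠ 0 := by positivity
      field_simp
    rw [Finset.sum_congr rfl heq, ← Finset.sum_mul, ← mul_assoc]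
  -- partial sums
  set Bf : ℕ → ℝ := fun m => ∑ i ∈ Finset.range m, b (i+1) with hBdef
  have hBnn : ∀ m, 0 ≤ Bf m := fun m =>
    Finset.sum_nonneg fun i _ => hbnn _
  have hBrec : ∀ m, 1 ≤ m → m ≤ k → Bf m ≤ c * S * (c + Bf (m-1)) := by
    intro m hm hmk
    have step1 : Bf m ≤ c * ∑ i ∈ Finset.range m, ∑ j ∈ Finset.range (i+1), s (j+1) * b (i-j) := by
      rw [Finset.mul_sum]
      exact Finset.sum_le_sum fun i _ => brec i
    have hswap : ∑ i ∈ Finset.range m, ∑ j ∈ Finset.range (i+1), s (j+1) * b (i-j)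
        = ∑ j ∈ Finset.range m, ∑ i ∈ Finset.Ico j m, s (j+1) * b (i-j) := by
      refine Finset.sum_comm' ?_
      intro i j
      simp only [Finset.mem_range, Finset.mem_Ico]
      omega
    have hinner : ∀ j ∈ Finset.range m,
        ∑ i ∈ Finset.Ico j m, s (j+1) * b (i-j) ≤ s (j+1) * (c + Bf (m-1)) := by
      intro j hj
      rw [← Finset.mul_sum]
      refine mul_le_mul_of_nonneg_left ?_ (hsnn _)
      have h2 : ∑ i ∈ Finset.Ico j m, b (i-j) = ∑ t ∈ Finset.range (m-j), b t := by
        rw [Finset.sum_Ico_eq_sum_range]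
        exact Finset.sum_congr rfl fun t _ => by rw [Nat.add_sub_cancel_left]
      rw [h2]
      have h3 : ∑ t ∈ Finset.range (m-j), b t ≤ ∑ t ∈ Finset.range m, b t :=
        Finset.sum_le_sum_of_subset_of_nonneg
          (Finset.range_subset_range.mpr (by omega)) fun t _ _ => hbnn t
      have h4 : ∑ t ∈ Finset.range m, b t = c + Bf (m-1) := by
        obtain ⟨u, rfl⟩ : ∃ u, m = u + 1 := ⟨m-1, by omega⟩
        rw [Finset.sum_range_succ' b u, hb0]
        simp only [Nat.add_sub_cancel]
        rw [add_comm]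
      linarith
    calc Bf m ≤ c * ∑ i ∈ Finset.range m, ∑ j ∈ Finset.range (i+1), s (j+1) * b (i-j) := step1
      _ = c * ∑ j ∈ Finset.range m, ∑ i ∈ Finset.Ico j m, s (j+1) * b (i-j) := by rw [hswap]
      _ ≤ c * ∑ j ∈ Finset.range m, s (j+1) * (c + Bf (m-1)) :=
          mul_le_mul_of_nonneg_left (Finset.sum_le_sum hinner) hcnn
      _ = c * ((∑ j ∈ Finset.range m, s (j+1)) * (c + Bf (m-1))) := by
          rw [← Finset.sum_mul]
      _ ≤ c * (S * (c + Bf (m-1))) := by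
          refine mul_le_mul_of_nonneg_left ?_ hcnn
          refine mul_le_mul_of_nonneg_right (hSle m hmk) ?_
          have := hBnn (m-1); linarith
      _ = c * S * (c + Bf (m-1)) := by ring
  -- main induction
  have hmain : ∀ m, m ≤ k → Bf m ≤ ∑ n ∈ Finset.range m, c^(n+2) * S^(n+1) := by
    intro m
    induction m with
    | zero => intro _; simp [hBdef]
    | succ m ih =>
      intro hmk
      have h1 := hBrec (m+1) (by omega) hmk
      simp only [Nat.add_sub_cancel] at h1
      have h2 := ih (by omega)
      calc Bf (m+1) ≤ c * S * (c + Bf m) := h1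
        _ ≤ c * S * (c + ∑ n ∈ Finset.range m, c^(n+2) * S^(n+1)) := by
            refine mul_le_mul_of_nonneg_left (by linarith) (by positivity)
        _ = ∑ n ∈ Finset.range (m+1), c^(n+2) * S^(n+1) := by
            rw [Finset.sum_range_succ' (fun n => c^(n+2) * S^(n+1)) m]
            rw [mul_add, Finset.mul_sum]
            rw [Finset.sum_congr rfl (fun n _ => show c * S * (c^(n+2) * S^(n+1))
              = c^(n+1+2) * S^(n+1+1) by ring)]
            ring
  have hLHS : ∑ m ∈ Finset.Icc 1 k, b m = Bf k := by
    rw [← Finset.Ico_add_one_right_eq_Icc, Finset.sum_Ico_eq_sum_range]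
    exact Finset.sum_congr rfl fun i _ => by rw [add_comm]
  have hRHS : ∑ n ∈ Finset.Icc 1 k, c^(n+1) * S^n = ∑ n ∈ Finset.range k, c^(n+2) * S^(n+1) := by
    rw [← Finset.Ico_add_one_right_eq_Icc, Finset.sum_Ico_eq_sum_range]
    exact Finset.sum_congr rfl fun n _ => by ring
  constructor
  · calc ∑ m ∈ Finset.Icc 1 k, b m = Bf k := hLHS
      _ ≤ ∑ n ∈ Finset.range k, c^(n+2) * S^(n+1) := hmain k le_rfl
      _ = ∑ n ∈ Finset.Icc 1 k, c^(n+1) * S^n := hRHS.symm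
  · rw [hRHS, Finset.mul_sum]
    exact Finset.sum_congr rfl fun n _ => by ring
end

section
/- Let A be a unital ring, φ : A → A a unital ring homomorphism, and Δ(x) = φ(x) − x with Δ^k its k-th iterate. Then for every invertible a ∈ A and every integer k ≥ 1: Δ^k(a⁻¹) = φ^k(a⁻¹) · Σ_{m=1}^{k} (−1)^m Σ_{(k_1,…,k_m)} (k!/(k_1!⋯k_m!)) · ∏_{j=1}^{m} φ^{k−(k_1+⋯+k_j)}( (Δ^{k_j}(a)) · a⁻¹ ), where the inner sum runs over all m-tuples (k_1,…,k_m) of positive integers with k_1+⋯+k_m = k, and the (non-commutative) product is taken in increasing order of the index j. -/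
open Finset

namespace IQR

variable {A : Type*} [Ring A]

/-- The difference operator. -/
def Δ (φ : A →+* A) : A → A := fun x => φ x - x

lemma delta_phi (φ : A →+* A) (x : A) : Δ φ (φ x) = φ (Δ φ x) := by
  simp [Δ, map_sub]

lemma delta_comm (φ : A →+* A) : Function.Commute (Δ φ) ⇑φ :=
  fun x => delta_phi φ x

lemma delta_iter_phi_iter (φ : A →+* A) (n m : ℕ) (x : A) :
    (Δ φ)^[n] ((⇑φ)^[m] x) = (⇑φ)^[m] ((Δ φ)^[n] x) :=
  (((delta_comm φ).iterate_left n).iterate_right m) x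

/-- `Δ` as an additive monoid hom. -/
def Dh (φ : A →+* A) : A →+ A := φ.toAddMonoidHom - AddMonoidHom.id A

lemma Dh_apply (φ : A →+* A) (x : A) : Dh φ x = Δ φ x := rfl

lemma delta_mul (φ : A →+* A) (x y : A) :
    Δ φ (x * y) = φ x * Δ φ y + Δ φ x * y := by
  simp only [Δ, map_mul]; noncomm_ring

lemma delta_cast_mul (φ : A →+* A) (c : ℕ) (x : A) :
    Δ φ ((c : A) * x) = (c : A) * Δ φ x := by
  simp [Δ, map_mul, map_natCast, mul_sub]

lemma binom_reindex (F : ℕ → A) (n : ℕ) :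
    ∑ j ∈ range (n+2), ((n+1).choose j : A) * F j =
      ∑ j ∈ range (n+1), (n.choose j : A) * F j +
      ∑ j ∈ range (n+1), (n.choose j : A) * F (j+1) := by
  rw [Finset.sum_range_succ' (fun j => ((n+1).choose j : A) * F j) (n+1)]
  simp only [Nat.choose_succ_succ, Nat.cast_add, add_mul, Finset.sum_add_distrib,
    Nat.choose_zero_right, Nat.cast_one]
  have h1 : (∑ j ∈ range (n+1), (n.choose (j+1) : A) * F (j+1)) + (1:A) * F 0
      = ∑ j ∈ range (n+2), (n.choose j : A) * F j := by
    rw [Finset.sum_range_succ' (fun j => (n.choose j : A) * F j) (n+1)]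
    simp
  have h2 : ∑ j ∈ range (n+2), (n.choose j : A) * F j
      = ∑ j ∈ range (n+1), (n.choose j : A) * F j := by
    rw [Finset.sum_range_succ]
    simp [Nat.choose_succ_self]
  calc ∑ j ∈ range (n+1), (n.choose j : A) * F (j+1)
        + ∑ j ∈ range (n+1), (n.choose (j+1) : A) * F (j+1) + (1:A) * F 0
      = ∑ j ∈ range (n+1), (n.choose j : A) * F (j+1)
        + ((∑ j ∈ range (n+1), (n.choose (j+1) : A) * F (j+1)) + (1:A) * F 0) := by
        rw [add_assoc]
    _ = ∑ j ∈ range (n+1), (n.choose j : A) * F (j+1)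
        + ∑ j ∈ range (n+1), (n.choose j : A) * F j := by rw [h1, h2]
    _ = _ := by rw [add_comm]

/-- Leibniz rule for the difference operator. -/
lemma leibniz (φ : A →+* A) (x y : A) (n : ℕ) :
    (Δ φ)^[n] (x * y) =
      ∑ j ∈ range (n+1), (n.choose j : A) *
        ((⇑φ)^[n-j] ((Δ φ)^[j] x) * (Δ φ)^[n-j] y) := by
  induction n with
  | zero => simp
  | succ n ih =>
    rw [Function.iterate_succ_apply', ih]
    have hsum : Δ φ (∑ j ∈ range (n+1), (n.choose j : A) *
        ((⇑φ)^[n-j] ((Δ φ)^[j] x) * (Δ φ)^[n-j] y))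
        = ∑ j ∈ range (n+1), Δ φ ((n.choose j : A) *
        ((⇑φ)^[n-j] ((Δ φ)^[j] x) * (Δ φ)^[n-j] y)) := by
      rw [← Dh_apply, map_sum]
      simp [Dh_apply]
    rw [hsum]
    have hterm : ∀ j ∈ range (n+1), Δ φ ((n.choose j : A) *
        ((⇑φ)^[n-j] ((Δ φ)^[j] x) * (Δ φ)^[n-j] y))
        = (n.choose j : A) * ((⇑φ)^[n+1-j] ((Δ φ)^[j] x) * (Δ φ)^[n+1-j] y)
          + (n.choose j : A) * ((⇑φ)^[n+1-(j+1)] ((Δ φ)^[j+1] x) * (Δ φ)^[n+1-(j+1)] y) := by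
      intro j hj
      rw [Finset.mem_range] at hj
      have hnj : n + 1 - j = (n - j) + 1 := by omega
      have hnj2 : n + 1 - (j + 1) = n - j := by omega
      rw [delta_cast_mul, delta_mul, hnj, hnj2, mul_add]
      congr 2
      · rw [Function.iterate_succ_apply' (⇑φ) (n-j), Function.iterate_succ_apply' (Δ φ) (n-j)]
      · congr 1
        have : Δ φ ((⇑φ)^[n-j] ((Δ φ)^[j] x)) = (⇑φ)^[n-j] (Δ φ ((Δ φ)^[j] x)) :=
          delta_iter_phi_iter φ 1 (n-j) _
        rw [this, ← Function.iterate_succ_apply' (Δ φ) j]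
    rw [Finset.sum_congr rfl hterm, Finset.sum_add_distrib]
    rw [show n + 1 + 1 = n + 2 from rfl, binom_reindex
      (fun j => (⇑φ)^[n+1-j] ((Δ φ)^[j] x) * (Δ φ)^[n+1-j] y) n]

section Defs

variable (φ : A →+* A) (a : Aˣ)

def dd (n : ℕ) : A := (Δ φ)^[n] (↑a : A) * (↑a⁻¹ : A)

def PP (K m : ℕ) (f : Fin m → ℕ) : A :=
  (List.ofFn fun i : Fin m => (⇑φ)^[K - ∑ l ∈ Finset.Iic i, f l] (dd φ a (f i))).prod

def TT (K m : ℕ) : A :=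
  ∑ f ∈ (Finset.Nat.antidiagonalTuple m K).filter (fun f => ∀ i, 0 < f i),
    (Nat.multinomial Finset.univ f : A) * PP φ a K m f

def SS (K : ℕ) : A := ∑ m ∈ Finset.range (K+1), (-1 : A)^m * TT φ a K m

end Defs

lemma sum_Iic_succ {M : Type*} [AddCommMonoid M] {m : ℕ} (h : Fin (m+1) → M) (i : Fin m) :
    ∑ l ∈ Finset.Iic i.succ, h l = h 0 + ∑ l ∈ Finset.Iic i, h l.succ := by
  have hIic : Finset.Iic i.succ
      = Finset.cons 0 ((Finset.Iic i).map ⟨Fin.succ, Fin.succ_injective m⟩)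
        (by simp [eq_comm, Fin.succ_ne_zero]) := by
    ext l
    refine Fin.cases ?_ (fun l' => ?_) l
    · simp [Fin.zero_le]
    · simp [Fin.succ_le_succ_iff, Fin.succ_ne_zero, Fin.succ_inj]
  rw [hIic, Finset.sum_cons, Finset.sum_map]
  rfl

lemma Iic_zero_fin (m : ℕ) : (Finset.Iic (0 : Fin (m+1))) = {0} := by
  ext l; simp [Fin.le_zero_iff]

lemma PP_cons (φ : A →+* A) (a : Aˣ) (K m j : ℕ) (g : Fin m → ℕ) :
    PP φ a K (m+1) (Fin.cons j g) = (⇑φ)^[K-j] (dd φ a j) * PP φ a (K-j) m g := by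
  have h0 : ∑ l ∈ Finset.Iic (0 : Fin (m+1)), (Fin.cons j g) l = j := by
    rw [Iic_zero_fin]; simp
  have hs : ∀ i : Fin m, ∑ l ∈ Finset.Iic i.succ, (Fin.cons j g) l
      = j + ∑ l ∈ Finset.Iic i, g l := by
    intro i
    rw [sum_Iic_succ (Fin.cons j g) i]
    simp
  simp only [PP, List.ofFn_succ, List.prod_cons, Fin.cons_zero, Fin.cons_succ, h0, hs,
    ← Nat.sub_sub]

lemma multinomial_map {α β : Type*} (s : Finset α) (e : α ↪ β) (f : β → ℕ) :
    Nat.multinomial (s.map e) f = Nat.multinomial s (f ∘ e) := by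
  simp [Nat.multinomial, Finset.sum_map, Finset.prod_map, Function.comp]

lemma mult_cons (m j : ℕ) (g : Fin m → ℕ) :
    Nat.multinomial Finset.univ (Fin.cons j g)
      = (j + ∑ i, g i).choose j * Nat.multinomial Finset.univ g := by
  rw [Fin.univ_succ, Nat.multinomial_cons, multinomial_map]
  simp [Finset.sum_map, Function.comp_def]

lemma sum_cons_eq (K m : ℕ) (F : (Fin (m+1) → ℕ) → A) :
    ∑ f ∈ (Finset.Nat.antidiagonalTuple (m+1) K).filter (fun f => ∀ i, 0 < f i), F f =
    ∑ j ∈ Icc 1 K, ∑ g ∈ (Finset.Nat.antidiagonalTuple m (K-j)).filter (fun g => ∀ i, 0 < g i),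
      F (Fin.cons j g) := by
  have key : ∑ f ∈ (Finset.Nat.antidiagonalTuple (m+1) K).filter (fun f => ∀ i, 0 < f i), F f
      = ∑ p ∈ (Icc 1 K).sigma (fun j =>
          (Finset.Nat.antidiagonalTuple m (K-j)).filter (fun g => ∀ i, 0 < g i)),
          F (Fin.cons p.1 p.2) := by
    refine Finset.sum_nbij' (fun f => (⟨f 0, Fin.tail f⟩ : Σ _ : ℕ, (Fin m → ℕ)))
      (fun p => Fin.cons p.1 p.2) ?_ ?_ ?_ ?_ ?_
    · intro f hf
      rw [Finset.mem_filter, Finset.Nat.mem_antidiagonalTuple] at hf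
      obtain ⟨hsum, hpos⟩ := hf
      have h0 : 0 < f 0 := hpos 0
      have hle : f 0 ≤ K := by
        rw [← hsum]
        exact Finset.single_le_sum (fun i _ => Nat.zero_le _) (Finset.mem_univ 0)
      rw [Finset.mem_sigma]
      constructor
      · exact Finset.mem_Icc.mpr ⟨h0, hle⟩
      · rw [Finset.mem_filter, Finset.Nat.mem_antidiagonalTuple]
        constructor
        · have hts := Fin.sum_univ_succ f
          rw [hsum] at hts
          have htl : ∀ i : Fin m, Fin.tail f i = f i.succ := fun _ => rfl
          simp only [htl]
          omega
        · intro i; exact hpos i.succ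
    · intro p hp
      rw [Finset.mem_sigma, Finset.mem_Icc, Finset.mem_filter,
        Finset.Nat.mem_antidiagonalTuple] at hp
      obtain ⟨⟨h1, h2⟩, hsum, hpos⟩ := hp
      rw [Finset.mem_filter, Finset.Nat.mem_antidiagonalTuple]
      constructor
      · rw [Fin.sum_univ_succ]
        simp only [Fin.cons_zero, Fin.cons_succ]
        omega
      · intro i
        refine Fin.cases ?_ (fun i' => ?_) i
        · simp only [Fin.cons_zero]; omega
        · simpa using hpos i'
    · intro f _; exact Fin.cons_self_tail f
    · intro p _
      simp only [Fin.cons_zero, Fin.tail_cons]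
    · intro f _
      rw [Fin.cons_self_tail]
  rw [key, Finset.sum_sigma]

lemma TT_succ (φ : A →+* A) (a : Aˣ) (K m : ℕ) :
    TT φ a K (m+1) = ∑ j ∈ Icc 1 K, (K.choose j : A) *
      ((⇑φ)^[K-j] (dd φ a j) * TT φ a (K-j) m) := by
  rw [TT, sum_cons_eq]
  refine Finset.sum_congr rfl fun j hj => ?_
  rw [Finset.mem_Icc] at hj
  rw [TT, Finset.mul_sum, Finset.mul_sum]
  refine Finset.sum_congr rfl fun g hg => ?_
  rw [Finset.mem_filter, Finset.Nat.mem_antidiagonalTuple] at hg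
  rw [PP_cons, mult_cons, hg.1]
  have hK : j + (K - j) = K := by omega
  rw [hK]
  push_cast
  rw [mul_assoc, ← mul_assoc ((Nat.multinomial Finset.univ g : A)) _ _,
    (Nat.cast_commute (Nat.multinomial Finset.univ g) ((⇑φ)^[K-j] (dd φ a j))).eq,
    mul_assoc ((⇑φ)^[K-j] (dd φ a j)) _ _]

lemma TT_zero_pos (φ : A →+* A) (a : Aˣ) (K : ℕ) (hK : 1 ≤ K) : TT φ a K 0 = 0 := by
  obtain ⟨n, rfl⟩ : ∃ n, K = n + 1 := ⟨K - 1, by omega⟩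
  rw [TT, Finset.Nat.antidiagonalTuple_zero_succ]
  simp

lemma TT_zero_zero (φ : A →+* A) (a : Aˣ) : TT φ a 0 0 = 1 := by
  rw [TT, Finset.Nat.antidiagonalTuple_zero_zero]
  rw [show (Finset.filter (fun f => ∀ i, 0 < f i) ({![]} : Finset (Fin 0 → ℕ)))
      = {![]} from by simp]
  rw [Finset.sum_singleton]
  simp [PP, Nat.multinomial]

lemma TT_big (φ : A →+* A) (a : Aˣ) (K m : ℕ) (h : K < m) : TT φ a K m = 0 := by
  rw [TT]
  refine Finset.sum_eq_zero fun f hf => absurd ?_ (by omega : ¬ m ≤ K)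
  rw [Finset.mem_filter, Finset.Nat.mem_antidiagonalTuple] at hf
  calc m = ∑ _i : Fin m, 1 := by simp
    _ ≤ ∑ i, f i := Finset.sum_le_sum fun i _ => hf.2 i
    _ = K := hf.1

lemma SS_zero (φ : A →+* A) (a : Aˣ) : SS φ a 0 = 1 := by
  rw [SS]
  simp [TT_zero_zero]

lemma SS_eq_icc (φ : A →+* A) (a : Aˣ) (K : ℕ) (hK : 1 ≤ K) :
    SS φ a K = ∑ m ∈ Icc 1 K, (-1 : A)^m * TT φ a K m := by
  rw [SS]
  refine (Finset.sum_subset (fun x hx => ?_) (fun x hx hnx => ?_)).symm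
  · rw [Finset.mem_Icc] at hx; rw [Finset.mem_range]; omega
  · rw [Finset.mem_range] at hx; rw [Finset.mem_Icc] at hnx
    have : x = 0 := by omega
    subst this
    rw [TT_zero_pos φ a K hK, mul_zero]

lemma sum_Icc_one (h : ℕ → A) (K : ℕ) :
    ∑ j ∈ Icc 1 K, h j = ∑ i ∈ range K, h (i+1) := by
  rw [← Finset.Ico_add_one_right_eq_Icc, Finset.sum_Ico_eq_sum_range]
  have hr : K + 1 - 1 = K := by omega
  rw [hr]
  exact Finset.sum_congr rfl fun i _ => by rw [Nat.add_comm]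

lemma aux_sign (P c x t : A) (hP : ∀ z : A, P * z = z * P) :
    P * (-1:A) * (c * (x * t)) = -(c * (x * (P * t))) := by
  rw [mul_assoc P, neg_one_mul, mul_neg, hP (c * (x * t)), mul_assoc c (x*t) P,
    mul_assoc x t P, ← hP t]

lemma SS_rec (φ : A →+* A) (a : Aˣ) (K : ℕ) (hK : 1 ≤ K) :
    SS φ a K = -∑ j ∈ Icc 1 K, (K.choose j : A) *
      ((⇑φ)^[K-j] (dd φ a j) * SS φ a (K-j)) := by
  obtain ⟨n, rfl⟩ : ∃ n, K = n + 1 := ⟨K - 1, by omega⟩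
  rw [SS, Finset.sum_range_succ' (fun m => (-1:A)^m * TT φ a (n+1) m) (n+1),
    TT_zero_pos φ a (n+1) hK]
  have hstep : ∀ m ∈ range (n+1), (-1:A)^(m+1) * TT φ a (n+1) (m+1)
      = -∑ j ∈ Icc 1 (n+1), ((n+1).choose j : A) * ((⇑φ)^[n+1-j] (dd φ a j) *
          ((-1:A)^m * TT φ a (n+1-j) m)) := by
    intro m _
    rw [TT_succ, Finset.mul_sum, ← Finset.sum_neg_distrib]
    refine Finset.sum_congr rfl fun j _ => ?_
    rw [pow_succ]
    exact aux_sign _ _ _ _ (fun z => ((Commute.neg_one_left z).pow_left m).eq)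
  have hinner : ∀ j ∈ Icc 1 (n+1), ∑ m ∈ range (n+1), (-1:A)^m * TT φ a (n+1-j) m
      = SS φ a (n+1-j) := by
    intro j hj
    rw [Finset.mem_Icc] at hj
    rw [SS]
    refine (Finset.sum_subset (fun x hx => ?_) (fun x hx hnx => ?_)).symm
    · rw [Finset.mem_range] at hx ⊢; omega
    · rw [Finset.mem_range] at hx hnx
      rw [TT_big φ a (n+1-j) x (by omega), mul_zero]
  rw [Finset.sum_congr rfl hstep, mul_zero, add_zero, Finset.sum_neg_distrib, Finset.sum_comm]
  rw [neg_inj]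
  refine Finset.sum_congr rfl fun j hj => ?_
  rw [← hinner j hj, Finset.mul_sum, Finset.mul_sum]

lemma delta_iter_one (φ : A →+* A) (k : ℕ) (hk : 1 ≤ k) : (Δ φ)^[k] (1 : A) = 0 := by
  obtain ⟨n, rfl⟩ : ∃ n, k = n + 1 := ⟨k - 1, by omega⟩
  rw [Function.iterate_succ_apply]
  have h1 : Δ φ (1 : A) = 0 := by simp [Δ]
  rw [h1]
  exact Function.iterate_fixed (by simp [Δ]) n

lemma main (φ : A →+* A) (a : Aˣ) :
    ∀ k, (Δ φ)^[k] (↑a⁻¹ : A) = (⇑φ)^[k] (↑a⁻¹ : A) * SS φ a k := by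
  intro k
  induction k using Nat.strong_induction_on with
  | _ k ih =>
    match k with
    | 0 => simp [SS_zero]
    | (n+1) =>
      have hK : 1 ≤ n + 1 := by omega
      have hone : ((↑a : A) * (↑a⁻¹ : A)) = 1 := Units.mul_inv a
      have h0 : ∑ j ∈ range (n+2), ((n+1).choose j : A) *
          ((⇑φ)^[n+1-j] ((Δ φ)^[j] (↑a : A)) * (Δ φ)^[n+1-j] (↑a⁻¹ : A)) = 0 := by
        rw [← leibniz φ (↑a : A) (↑a⁻¹ : A) (n+1), hone]
        exact delta_iter_one φ (n+1) hK
      rw [Finset.sum_range_succ' (fun j => ((n+1).choose j : A) *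
          ((⇑φ)^[n+1-j] ((Δ φ)^[j] (↑a : A)) * (Δ φ)^[n+1-j] (↑a⁻¹ : A))) (n+1)] at h0
      simp only [Nat.choose_zero_right, Nat.cast_one, one_mul, Nat.sub_zero,
        Function.iterate_zero, id_eq] at h0
      have key : (⇑φ)^[n+1] (↑a : A) * (Δ φ)^[n+1] (↑a⁻¹ : A)
          = -∑ j ∈ range (n+1), ((n+1).choose (j+1) : A) *
              ((⇑φ)^[n-j] (dd φ a (j+1)) * SS φ a (n-j)) := by
        have h1 := eq_neg_of_add_eq_zero_right h0
        rw [h1, neg_inj]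
        refine Finset.sum_congr rfl fun j hj => ?_
        rw [Finset.mem_range] at hj
        have hsub : n + 1 - (j+1) = n - j := by omega
        rw [hsub, ih (n-j) (by omega),
          ← mul_assoc ((⇑φ)^[n-j] ((Δ φ)^[j+1] (↑a : A))) ((⇑φ)^[n-j] (↑a⁻¹ : A))
            (SS φ a (n-j)),
          ← iterate_map_mul φ (n-j) ((Δ φ)^[j+1] (↑a : A)) (↑a⁻¹ : A)]
        simp only [dd]
      have hrec := SS_rec φ a (n+1) hK
      rw [sum_Icc_one (fun j => ((n+1).choose j : A) *
          ((⇑φ)^[n+1-j] (dd φ a j) * SS φ a (n+1-j))) (n+1)] at hrec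
      simp only [Nat.succ_sub_succ_eq_sub] at hrec
      have keySS : (⇑φ)^[n+1] (↑a : A) * (Δ φ)^[n+1] (↑a⁻¹ : A) = SS φ a (n+1) := by
        rw [key, hrec]
      have hba : (⇑φ)^[n+1] (↑a⁻¹ : A) * (⇑φ)^[n+1] (↑a : A) = 1 := by
        rw [← iterate_map_mul φ (n+1) (↑a⁻¹ : A) (↑a : A), Units.inv_mul]
        exact iterate_map_one φ (n+1)
      calc (Δ φ)^[n+1] (↑a⁻¹ : A) = 1 * (Δ φ)^[n+1] (↑a⁻¹ : A) := (one_mul _).symm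
        _ = ((⇑φ)^[n+1] (↑a⁻¹ : A) * (⇑φ)^[n+1] (↑a : A)) * (Δ φ)^[n+1] (↑a⁻¹ : A) := by
            rw [hba]
        _ = (⇑φ)^[n+1] (↑a⁻¹ : A) * ((⇑φ)^[n+1] (↑a : A) * (Δ φ)^[n+1] (↑a⁻¹ : A)) := by
            rw [mul_assoc]
        _ = (⇑φ)^[n+1] (↑a⁻¹ : A) * SS φ a (n+1) := by rw [keySS]

end IQR

/-- **Iterated quotient rule for difference operators.**
Let `A` be a unital ring, `φ : A → A` a unital ring homomorphism, and
`Δ(x) = φ(x) − x`. Then for every invertible `a ∈ A` and every `k ≥ 1`: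
`Δ^k(a⁻¹) = φ^k(a⁻¹) · Σ_{m=1}^{k} (−1)^m Σ_{(k_1,…,k_m)} (k!/(k_1!⋯k_m!)) ·
  ∏_{j=1}^{m} φ^{k−(k_1+⋯+k_j)}( (Δ^{k_j}(a)) · a⁻¹ )`,
where the inner sum runs over all `m`-tuples of positive integers summing to `k`,
and the non-commutative product is taken in increasing order of the index. -/
theorem iterated_quotient_rule_difference {A : Type*} [Ring A]
    (φ : A →+* A) (k : ℕ) (hk : 1 ≤ k) (a : Aˣ) :
    (fun x => φ x - x)^[k] (↑a⁻¹ : A) =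
      (⇑φ)^[k] (↑a⁻¹ : A) *
        ∑ m ∈ Finset.Icc 1 k, (-1 : A) ^ m *
          ∑ f ∈ (Finset.Nat.antidiagonalTuple m k).filter (fun f => ∀ i, 0 < f i),
            (Nat.multinomial Finset.univ f : A) *
              (List.ofFn fun j : Fin m =>
                (⇑φ)^[k - ∑ l ∈ Finset.Iic j, f l]
                  (((fun x => φ x - x)^[f j] (↑a : A)) * (↑a⁻¹ : A))).prod := by
  have h := IQR.main φ a k
  rw [IQR.SS_eq_icc φ a k hk] at h
  exact h
end

section
/- Let A be a unital Banach algebra, D : A → A an additive map satisfying the Leibniz rule, and (M_k)_{k≥0} positive reals with M_0 = 1 and M_{k+l}/(k+l)! ≥ (M_k/k!)·(M_l/l!) for all k, l ≥ 0. Define A_m = ( sup { (k!/M_k)·∏_{j=1}^{m} M_{l_j}/(l_j!) : (l_1,…,l_m) positive integers, l_1+⋯+l_m = k, k ranging over k ≥ m } )^{1/m}. Then for every invertible a ∈ A, with S = Σ_{k=1}^{∞} ‖D^k(a)‖/M_k, the following inequality holds in [0,∞]: Σ_{k=0}^{∞} ‖D^k(a⁻¹)‖/M_k ≤ ‖a⁻¹‖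 + Σ_{m=1}^{∞} ‖a⁻¹‖^{m+1}·A_m^{m}·S^{m}. -/
open scoped ENNReal
open Finset

section Aux

variable {A : Type*} [NormedRing A]

theorem nci_leibniz (D : A → A)
    (hadd : ∀ x y : A, D (x + y) = D x + D y)
    (hmul : ∀ x y : A, D (x * y) = x * D y + D x * y)
    (x y : A) (n : ℕ) :
    D^[n] (x * y) = ∑ j ∈ Finset.range (n + 1),
      (n.choose j) • (D^[j] x * D^[n - j] y) := by
  have hzero : D 0 = 0 := by
    have := hadd 0 0
    rw [add_zero] at this
    exact left_eq_add.mp this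
  have hsum : ∀ (s : Finset ℕ) (f : ℕ → A), D (∑ j ∈ s, f j) = ∑ j ∈ s, D (f j) := by
    intro s f
    induction s using Finset.induction with
    | empty => simpa using hzero
    | insert _ _ hns ih => rw [Finset.sum_insert hns, hadd, ih, Finset.sum_insert hns]
  have hnsmul : ∀ (c : ℕ) (z : A), D (c • z) = c • D z := by
    intro c z
    induction c with
    | zero => simpa using hzero
    | succ c ih => rw [succ_nsmul, succ_nsmul, hadd, ih]
  induction n with
  | zero => simp
  | succ n ih =>
    rw [Function.iterate_succ_apply', ih, hsum]
    have term : ∀ j, D ((n.choose j) • (D^[j] x * D^[n - j] y))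
        = n.choose j • (D^[j] x * D^[n - j + 1] y) + n.choose j • (D^[j + 1] x * D^[n - j] y) := by
      intro j
      rw [hnsmul, hmul, Function.iterate_succ_apply', Function.iterate_succ_apply', smul_add]
    calc ∑ j ∈ range (n + 1), D ((n.choose j) • (D^[j] x * D^[n - j] y))
        = ∑ j ∈ range (n + 1), n.choose j • (D^[j] x * D^[n - j + 1] y)
            + ∑ j ∈ range (n + 1), n.choose j • (D^[j + 1] x * D^[n - j] y) := by
          rw [← Finset.sum_add_distrib]
          exact Finset.sum_congr rfl fun j _ => term j
      _ = ∑ j ∈ range (n + 1 + 1), (n + 1).choose j • (D^[j] x * D^[n + 1 - j] y) := by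
          conv_rhs => rw [Finset.sum_range_succ'
            (fun j => (n + 1).choose j • (D^[j] x * D^[n + 1 - j] y)) (n + 1)]
          have h1 : ∀ j ∈ range (n + 1),
              (n + 1).choose (j + 1) • (D^[j + 1] x * D^[n + 1 - (j + 1)] y)
              = n.choose j • (D^[j + 1] x * D^[n - j] y)
                + n.choose (j + 1) • (D^[j + 1] x * D^[n - j] y) := by
            intro j hj
            have e : n + 1 - (j + 1) = n - j := by omega
            rw [e, Nat.choose_succ_succ, add_nsmul]
          rw [Finset.sum_congr rfl h1, Finset.sum_add_distrib]
          have h2 : ∑ j ∈ range (n + 1), n.choose (j + 1) • (D^[j + 1] x * D^[n - j] y)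
              = ∑ j ∈ range n, n.choose (j + 1) • (D^[j + 1] x * D^[n - j] y) := by
            rw [Finset.sum_range_succ, Nat.choose_succ_self]
            simp
          have h3 : ∑ j ∈ range (n + 1), n.choose j • (D^[j] x * D^[n - j + 1] y)
              = ∑ j ∈ range n, n.choose (j + 1) • (D^[j + 1] x * D^[n - (j + 1) + 1] y)
                + n.choose 0 • (D^[0] x * D^[n - 0 + 1] y) :=
            Finset.sum_range_succ' _ n
          have h4 : ∑ j ∈ range n, n.choose (j + 1) • (D^[j + 1] x * D^[n - (j + 1) + 1] y)
              = ∑ j ∈ range n, n.choose (j + 1) • (D^[j + 1] x * D^[n - j] y) := by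
            refine Finset.sum_congr rfl fun j hj => ?_
            have : n - (j + 1) + 1 = n - j := by
              have := Finset.mem_range.mp hj; omega
            rw [this]
          rw [h2, h3, h4]
          simp only [Nat.choose_zero_right, Nat.choose_self, one_smul,
            Function.iterate_zero_apply, Nat.sub_zero, Nat.add_sub_cancel_left]
          abel

theorem nci_rec (D : A → A)
    (hadd : ∀ x y : A, D (x + y) = D x + D y)
    (hmul : ∀ x y : A, D (x * y) = x * D y + D x * y)
    (a : Aˣ) (k : ℕ) (hk : 1 ≤ k) :
    ‖D^[k] (↑a⁻¹ : A)‖ ≤ ‖(↑a⁻¹ : A)‖ * ∑ j ∈ range k,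
      (k.choose (j + 1) : ℝ) * (‖D^[j + 1] (↑a : A)‖ * ‖D^[k - 1 - j] (↑a⁻¹ : A)‖) := by
  have hzero : D 0 = 0 := by
    have := hadd 0 0
    rw [add_zero] at this
    exact left_eq_add.mp this
  have hone : D 1 = 0 := by
    have := hmul 1 1
    rw [mul_one, one_mul, mul_one] at this
    exact left_eq_add.mp this
  have hiter0 : ∀ m, D^[m] (0 : A) = 0 := by
    intro m
    induction m with
    | zero => rfl
    | succ m ih => rw [Function.iterate_succ_apply, hzero, ih]
  have hiter1 : D^[k] (1 : A) = 0 := by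
    obtain ⟨k, rfl⟩ := Nat.exists_eq_add_of_le hk
    rw [add_comm, Function.iterate_add_apply, Function.iterate_one, hone, hiter0]
  have key : (↑a : A) * D^[k] (↑a⁻¹ : A)
      = -∑ j ∈ range k, (k.choose (j + 1)) • (D^[j + 1] (↑a : A) * D^[k - 1 - j] (↑a⁻¹ : A)) := by
    have h0 := nci_leibniz D hadd hmul (↑a : A) (↑a⁻¹ : A) k
    rw [Units.mul_inv, hiter1] at h0
    rw [Finset.sum_range_succ'] at h0
    simp only [Nat.choose_zero_right, one_smul, Function.iterate_zero_apply, Nat.sub_zero] at h0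
    have e : ∀ j ∈ range k, (k.choose (j + 1)) • (D^[j + 1] (↑a : A) * D^[k - (j + 1)] (↑a⁻¹ : A))
        = (k.choose (j + 1)) • (D^[j + 1] (↑a : A) * D^[k - 1 - j] (↑a⁻¹ : A)) := by
      intro j hj
      have : k - (j + 1) = k - 1 - j := by omega
      rw [this]
    rw [Finset.sum_congr rfl e] at h0
    exact eq_neg_of_add_eq_zero_right h0.symm
  have hrepr : D^[k] (↑a⁻¹ : A) = (↑a⁻¹ : A) * ((↑a : A) * D^[k] (↑a⁻¹ : A)) := by
    rw [← mul_assoc, Units.inv_mul, one_mul]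
  calc ‖D^[k] (↑a⁻¹ : A)‖ = ‖(↑a⁻¹ : A) * ((↑a : A) * D^[k] (↑a⁻¹ : A))‖ := by rw [← hrepr]
    _ ≤ ‖(↑a⁻¹ : A)‖ * ‖(↑a : A) * D^[k] (↑a⁻¹ : A)‖ := norm_mul_le _ _
    _ ≤ _ := by
        refine mul_le_mul_of_nonneg_left ?_ (norm_nonneg _)
        rw [key, norm_neg]
        refine (norm_sum_le _ _).trans (Finset.sum_le_sum fun j _ => ?_)
        refine norm_nsmul_le.trans ?_
        exact mul_le_mul_of_nonneg_left (norm_mul_le _ _) (by positivity)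

end Aux

noncomputable def nciT (u : ℕ → ℝ≥0∞) (m k : ℕ) : ℝ≥0∞ :=
  ∑' f : Fin m → ℕ, if (∑ i, (f i + 1)) = k then ∏ i, u (f i) else 0

theorem nci_tsum_ite (c : ℕ) (x : ℝ≥0∞) : ∑' k : ℕ, (if c = k then x else 0) = x := by
  rw [tsum_eq_single c fun b' hb' => if_neg fun h => hb' h.symm, if_pos rfl]

theorem nciT_succ (u : ℕ → ℝ≥0∞) (m k : ℕ) :
    nciT u (m + 1) k = ∑' j : ℕ, ∑' g : Fin m → ℕ,
      if (j + 1) + (∑ i, (g i + 1)) = k then u j * ∏ i, u (g i) else 0 := by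
  rw [nciT, ← Equiv.tsum_eq (Fin.consEquiv fun _ => ℕ), ENNReal.tsum_prod']
  refine tsum_congr fun j => tsum_congr fun g => ?_
  simp [Fin.consEquiv, Fin.sum_univ_succ, Fin.prod_univ_succ]

theorem nciT_one (u : ℕ → ℝ≥0∞) (k : ℕ) (hk : 1 ≤ k) : nciT u 1 k = u (k - 1) := by
  rw [nciT_succ]
  have h1 : ∀ j : ℕ, (∑' g : Fin 0 → ℕ,
      if (j + 1) + (∑ i, (g i + 1)) = k then u j * ∏ i, u (g i) else 0)
      = if j = k - 1 then u j else 0 := by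
    intro j
    rw [tsum_eq_single default fun b' hb' => absurd (Subsingleton.elim b' default) hb']
    simp only [Finset.univ_eq_empty, Finset.sum_empty, Finset.prod_empty, add_zero, mul_one]
    refine if_congr ?_ rfl rfl
    omega
  rw [tsum_congr h1]
  calc ∑' j : ℕ, (if j = k - 1 then u j else 0)
      = ∑' j : ℕ, (if j = k - 1 then u (k - 1) else 0) :=
        tsum_congr fun j => by split_ifs with h <;> simp [h]
    _ = u (k - 1) := tsum_ite_eq _ _

theorem nciT_split (u : ℕ → ℝ≥0∞) (m k : ℕ) :
    ∑ j ∈ Finset.range k, u j * nciT u m (k - 1 - j) ≤ nciT u (m + 1) k := by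
  rw [nciT_succ]
  refine le_trans ?_ (ENNReal.sum_le_tsum (Finset.range k))
  refine Finset.sum_le_sum fun j hj => ?_
  have hjk := Finset.mem_range.mp hj
  rw [nciT, ← ENNReal.tsum_mul_left]
  refine ENNReal.tsum_le_tsum fun g => ?_
  rw [mul_ite, mul_zero]
  exact le_of_eq (if_congr (by omega) rfl rfl)

theorem nciT_total (u : ℕ → ℝ≥0∞) (m : ℕ) :
    ∑' k : ℕ, nciT u m k = (∑' j : ℕ, u j) ^ m := by
  have P : ∀ n : ℕ, ∑' f : Fin n → ℕ, ∏ i, u (f i) = (∑' j : ℕ, u j) ^ n := by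
    intro n
    induction n with
    | zero =>
      rw [tsum_eq_single default fun b' hb' => absurd (Subsingleton.elim b' default) hb']
      simp
    | succ n ih =>
      rw [← Equiv.tsum_eq (Fin.consEquiv fun _ => ℕ), ENNReal.tsum_prod']
      have h1 : ∀ (j : ℕ) (g : Fin n → ℕ),
          (∏ i, u ((Fin.consEquiv fun _ => ℕ) (j, g) i)) = u j * ∏ i, u (g i) := by
        intro j g; simp [Fin.consEquiv, Fin.prod_univ_succ]
      calc ∑' (j : ℕ) (g : Fin n → ℕ), ∏ i, u ((Fin.consEquiv fun _ => ℕ) (j, g) i)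
          = ∑' (j : ℕ), u j * ∑' g : Fin n → ℕ, ∏ i, u (g i) := by
            refine tsum_congr fun j => ?_
            rw [← ENNReal.tsum_mul_left]
            exact tsum_congr fun g => h1 j g
        _ = (∑' j : ℕ, u j) ^ (n + 1) := by
            rw [ENNReal.tsum_mul_right, ih, pow_succ, mul_comm]
  have Q : ∑' k : ℕ, nciT u m k = ∑' f : Fin m → ℕ, ∏ i, u (f i) := by
    rw [show ∑' k : ℕ, nciT u m k = ∑' (k : ℕ) (f : Fin m → ℕ),
      (if (∑ i, (f i + 1)) = k then ∏ i, u (f i) else 0) from rfl, ENNReal.tsum_comm]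
    exact tsum_congr fun f => nci_tsum_ite _ _
  rw [Q, P]

theorem nci_main (u E : ℕ → ℝ≥0∞) (β : ℝ≥0∞) (hE0 : E 0 = β)
    (hrec : ∀ k, 1 ≤ k → E k ≤ β * ∑ j ∈ Finset.range k, u j * E (k - 1 - j)) :
    ∀ k, 1 ≤ k → E k ≤ ∑' m : ℕ, β ^ (m + 2) * nciT u (m + 1) k := by
  intro k
  induction k using Nat.strong_induction_on with
  | _ k IH =>
  intro hk
  obtain ⟨n, rfl⟩ : ∃ n, k = n + 1 := ⟨k - 1, by omega⟩
  refine (hrec (n + 1) hk).trans ?_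
  rw [Finset.sum_range_succ]
  have hlast : u n * E ((n + 1) - 1 - n) = u n * β := by
    rw [show (n + 1) - 1 - n = 0 by omega, hE0]
  rw [hlast]
  have hstep : ∑ j ∈ Finset.range n, u j * E ((n + 1) - 1 - j)
      ≤ ∑' m : ℕ, β ^ (m + 2) * nciT u (m + 2) (n + 1) := by
    calc ∑ j ∈ Finset.range n, u j * E ((n + 1) - 1 - j)
        ≤ ∑ j ∈ Finset.range n, u j * ∑' m : ℕ, β ^ (m + 2) * nciT u (m + 1) (n - j) := by
          refine Finset.sum_le_sum fun j hj => ?_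
          have hjn := Finset.mem_range.mp hj
          have e : (n + 1) - 1 - j = n - j := by omega
          rw [e]
          exact mul_le_mul_right (IH (n - j) (by omega) (by omega)) _
      _ = ∑ j ∈ Finset.range n, ∑' m : ℕ, u j * (β ^ (m + 2) * nciT u (m + 1) (n - j)) :=
          Finset.sum_congr rfl fun j _ => ENNReal.tsum_mul_left.symm
      _ = ∑' m : ℕ, ∑ j ∈ Finset.range n, u j * (β ^ (m + 2) * nciT u (m + 1) (n - j)) :=
          (Summable.tsum_finsetSum fun i _ => ENNReal.summable).symm
      _ = ∑' m : ℕ, β ^ (m + 2) * ∑ j ∈ Finset.range n, u j * nciT u (m + 1) (n - j) := by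
          refine tsum_congr fun m => ?_
          rw [Finset.mul_sum]
          exact Finset.sum_congr rfl fun j _ => mul_left_comm _ _ _
      _ ≤ ∑' m : ℕ, β ^ (m + 2) * nciT u (m + 2) (n + 1) := by
          refine ENNReal.tsum_le_tsum fun m => mul_le_mul_right ?_ _
          refine le_trans ?_ (nciT_split u (m + 1) (n + 1))
          have : ∀ j ∈ Finset.range n, u j * nciT u (m + 1) (n - j)
              = u j * nciT u (m + 1) ((n + 1) - 1 - j) := by
            intro j hj
            rw [show (n + 1) - 1 - j = n - j by omega]
          rw [Finset.sum_congr rfl this]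
          exact Finset.sum_le_sum_of_subset (Finset.range_subset_range.mpr (by omega))
  calc β * (∑ j ∈ Finset.range n, u j * E ((n + 1) - 1 - j) + u n * β)
      ≤ β * (∑' m : ℕ, β ^ (m + 2) * nciT u (m + 2) (n + 1) + u n * β) := by
        exact mul_le_mul_right (add_le_add_left hstep _) _
    _ = β ^ 2 * nciT u 1 (n + 1) + ∑' m : ℕ, β ^ (m + 3) * nciT u (m + 2) (n + 1) := by
        rw [mul_add, ← ENNReal.tsum_mul_left]
        rw [nciT_one u (n + 1) (by omega), show (n + 1) - 1 = n from rfl]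
        rw [add_comm]
        congr 1
        · rw [mul_comm (u n) β, ← mul_assoc, ← pow_two]
        · exact tsum_congr fun m => by rw [← mul_assoc, ← pow_succ']
    _ = ∑' m : ℕ, β ^ (m + 2) * nciT u (m + 1) (n + 1) := by
        have := tsum_eq_zero_add' (f := fun m => β ^ (m + 2) * nciT u (m + 1) (n + 1))
          ENNReal.summable
        rw [this]

theorem nci_ofReal_prod {ι : Type*} (s : Finset ι) (f : ι → ℝ) (h : ∀ i ∈ s, 0 ≤ f i) :
    ENNReal.ofReal (∏ i ∈ s, f i) = ∏ i ∈ s, ENNReal.ofReal (f i) := by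
  induction s using Finset.cons_induction with
  | empty => simp
  | cons a s ha ih =>
    rw [Finset.prod_cons, Finset.prod_cons,
      ENNReal.ofReal_mul (h a (Finset.mem_cons_self a s)),
      ih fun i hi => h i (Finset.mem_cons_of_mem hi)]


theorem nci_div_split (x F Mv : ℝ) (h1 : F ≠ 0) (h2 : Mv ≠ 0) :
    x / F = Mv / F * (x / Mv) := by
  field_simp

theorem nci_arith (c : ℕ) (p q F1 F2 FK : ℝ) (h1 : F1 ≠ 0) (h2 : F2 ≠ 0)
    (h3 : (c : ℝ) * F1 * F2 = FK) :
    (c : ℝ) * (p * q) = p / F1 * (q / F2) * FK := by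
  subst h3; field_simp

set_option maxHeartbeats 1000000 in
/-- **Norm-controlled inversion estimate in Dales-Davie algebras.**
Let `A` be a unital Banach algebra, `D : A → A` an additive map satisfying the
Leibniz rule, and `(M_k)` positive reals with `M_0 = 1` and
`M_{k+l}/(k+l)! ≥ (M_k/k!)·(M_l/l!)`. With
`A_m = (sup {(k!/M_k)·∏_j M_{l_j}/l_j! : l_j ≥ 1, Σ l_j = k})^{1/m}` and
`S = Σ_{k≥1} ‖D^k(a)‖/M_k`, for every invertible `a`:
`Σ_{k≥0} ‖D^k(a⁻¹)‖/M_k ≤ ‖a⁻¹‖ + Σ_{m≥1} ‖a⁻¹‖^{m+1}·A_m^m·S^m` in `[0,∞]`. -/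
theorem dales_davie_nci_estimate {A : Type*} [NormedRing A] [CompleteSpace A]
    (D : A → A)
    (hadd : ∀ x y : A, D (x + y) = D x + D y)
    (hmul : ∀ x y : A, D (x * y) = x * D y + D x * y)
    (M : ℕ → ℝ) (hMpos : ∀ k, 0 < M k) (hM0 : M 0 = 1)
    (hMsub : ∀ k l : ℕ,
      M k / (k.factorial : ℝ) * (M l / (l.factorial : ℝ)) ≤
        M (k + l) / ((k + l).factorial : ℝ))
    (Am : ℕ → ℝ)
    (hAm : ∀ m : ℕ, 1 ≤ m → Am m =
      (sSup {x : ℝ | ∃ f : Fin m → ℕ, (∀ i, 0 < f i) ∧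
        x = (((∑ i, f i).factorial : ℝ) / M (∑ i, f i)) *
              ∏ i, M (f i) / ((f i).factorial : ℝ)}) ^ ((1 : ℝ) / m))
    (a : Aˣ) (S : ℝ≥0∞)
    (hS : S = ∑' k : ℕ, ENNReal.ofReal (‖D^[k + 1] (↑a : A)‖ / M (k + 1))) :
    (∑' k : ℕ, ENNReal.ofReal (‖D^[k] (↑a⁻¹ : A)‖ / M k)) ≤
      ENNReal.ofReal ‖(↑a⁻¹ : A)‖ +
        ∑' m : ℕ,
          ENNReal.ofReal (‖(↑a⁻¹ : A)‖ ^ (m + 2) * Am (m + 1) ^ (m + 1)) *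
            S ^ (m + 1) := by
  classical
  have hfac : ∀ n : ℕ, (0 : ℝ) < (n.factorial : ℝ) :=
    fun n => Nat.cast_pos.mpr n.factorial_pos
  set β : ℝ≥0∞ := ENNReal.ofReal ‖(↑a⁻¹ : A)‖ with hβ
  set u : ℕ → ℝ≥0∞ :=
    fun j => ENNReal.ofReal (‖D^[j + 1] (↑a : A)‖ / ((j + 1).factorial : ℝ)) with hu
  set v : ℕ → ℝ≥0∞ :=
    fun j => ENNReal.ofReal (‖D^[j + 1] (↑a : A)‖ / M (j + 1)) with hv
  set E : ℕ → ℝ≥0∞ :=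
    fun k => ENNReal.ofReal (‖D^[k] (↑a⁻¹ : A)‖ / (k.factorial : ℝ)) with hE
  set σ : ℕ → ℝ := fun m => sSup {x : ℝ | ∃ f : Fin m → ℕ, (∀ i, 0 < f i) ∧
        x = (((∑ i, f i).factorial : ℝ) / M (∑ i, f i)) *
              ∏ i, M (f i) / ((f i).factorial : ℝ)} with hσdef
  -- supermultiplicativity of M along tuples
  have prodM : ∀ (m : ℕ) (f : Fin m → ℕ),
      (∏ i, M (f i) / ((f i).factorial : ℝ))
        ≤ M (∑ i, f i) / ((∑ i, f i).factorial : ℝ) := by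
    intro m
    induction m with
    | zero => intro f; simp [hM0]
    | succ m ih =>
      intro f
      rw [Fin.prod_univ_succ, Fin.sum_univ_succ]
      refine le_trans ?_ (hMsub (f 0) (∑ i, f (Fin.succ i)))
      refine mul_le_mul_of_nonneg_left (ih _) ?_
      have := hMpos (f 0); have := hfac (f 0); positivity
  have hbdd : ∀ m : ℕ, BddAbove {x : ℝ | ∃ f : Fin m → ℕ, (∀ i, 0 < f i) ∧
      x = (((∑ i, f i).factorial : ℝ) / M (∑ i, f i)) *
            ∏ i, M (f i) / ((f i).factorial : ℝ)} := by
    intro m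
    refine ⟨1, fun x hx => ?_⟩
    obtain ⟨f, -, rfl⟩ := hx
    calc (((∑ i, f i).factorial : ℝ) / M (∑ i, f i)) * ∏ i, M (f i) / ((f i).factorial : ℝ)
        ≤ (((∑ i, f i).factorial : ℝ) / M (∑ i, f i))
            * (M (∑ i, f i) / ((∑ i, f i).factorial : ℝ)) := by
          refine mul_le_mul_of_nonneg_left (prodM m f) ?_
          have := hMpos (∑ i, f i); have := hfac (∑ i, f i); positivity
      _ = 1 := by
          have hx : (0:ℝ) < M (∑ i, f i) * (((∑ i, f i).factorial : ℝ)) := by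
            have := hMpos (∑ i, f i); have := hfac (∑ i, f i); positivity
          rw [div_mul_div_comm, mul_comm]
          exact div_self (mul_pos (hMpos (∑ i, f i)) (hfac (∑ i, f i))).ne'
  have hσ_ge : ∀ (m : ℕ) (f : Fin m → ℕ),
      (((∑ i, (f i + 1)).factorial : ℝ) / M (∑ i, (f i + 1))) *
          ∏ i, M (f i + 1) / ((f i + 1).factorial : ℝ) ≤ σ m := by
    intro m f
    exact le_csSup (hbdd m) ⟨fun i => f i + 1, fun i => Nat.succ_pos _, rfl⟩
  have hσ0 : ∀ m : ℕ, 0 ≤ σ m := by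
    intro m
    refine le_trans ?_ (hσ_ge m fun _ => 0)
    have h1 := hMpos (∑ i : Fin m, (0 + 1))
    have h2 := hfac (∑ i : Fin m, (0 + 1))
    have h3 : (0:ℝ) ≤ ∏ i : Fin m, M (0 + 1) / ((0 + 1).factorial : ℝ) := by
      refine Finset.prod_nonneg fun i _ => ?_
      have := hMpos 1; have := hfac 1; positivity
    positivity
  -- recursion for E
  have hE0 : E 0 = β := by
    rw [hE, hβ]; simp
  have hErec : ∀ k, 1 ≤ k → E k ≤ β * ∑ j ∈ Finset.range k, u j * E (k - 1 - j) := by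
    intro k hk
    have h1 := nci_rec D hadd hmul a k hk
    have h2 : ‖D^[k] (↑a⁻¹ : A)‖ / (k.factorial : ℝ)
        ≤ ‖(↑a⁻¹ : A)‖ * ∑ j ∈ Finset.range k,
          (‖D^[j + 1] (↑a : A)‖ / ((j + 1).factorial : ℝ))
            * (‖D^[k - 1 - j] (↑a⁻¹ : A)‖ / ((k - 1 - j).factorial : ℝ)) := by
      rw [div_le_iff₀ (hfac k)]
      refine h1.trans (le_of_eq ?_)
      rw [mul_assoc, Finset.sum_mul]
      congr 1
      refine Finset.sum_congr rfl fun j hj => ?_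
      have hjk := Finset.mem_range.mp hj
      have hch : ((k.choose (j + 1) : ℕ) : ℝ) * ((j + 1).factorial : ℝ)
          * ((k - 1 - j).factorial : ℝ) = (k.factorial : ℝ) := by
        rw [show k - 1 - j = k - (j + 1) by omega]
        exact_mod_cast congrArg (Nat.cast (R := ℝ))
          (Nat.choose_mul_factorial_mul_factorial (by omega : j + 1 ≤ k))
      exact nci_arith _ _ _ _ _ _ (ne_of_gt (hfac (j + 1))) (ne_of_gt (hfac (k - 1 - j))) hch
    calc E k = ENNReal.ofReal (‖D^[k] (↑a⁻¹ : A)‖ / (k.factorial : ℝ)) := rfl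
      _ ≤ ENNReal.ofReal (‖(↑a⁻¹ : A)‖ * ∑ j ∈ Finset.range k,
            (‖D^[j + 1] (↑a : A)‖ / ((j + 1).factorial : ℝ))
              * (‖D^[k - 1 - j] (↑a⁻¹ : A)‖ / ((k - 1 - j).factorial : ℝ))) :=
          ENNReal.ofReal_le_ofReal h2
      _ = β * ∑ j ∈ Finset.range k, u j * E (k - 1 - j) := by
          rw [ENNReal.ofReal_mul (norm_nonneg _), hβ]
          congr 1
          rw [ENNReal.ofReal_sum_of_nonneg (fun j _ => by positivity)]
          refine Finset.sum_congr rfl fun j hj => ?_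
          rw [ENNReal.ofReal_mul (by positivity)]
  -- main combinatorial bound
  have hmain := nci_main u E β hE0 hErec
  -- comparison between u-sums and v-sums
  have hcomp : ∀ (m k : ℕ), ENNReal.ofReal ((k.factorial : ℝ) / M k) * nciT u m k
      ≤ ENNReal.ofReal (σ m) * nciT v m k := by
    intro m k
    rw [nciT, nciT, ← ENNReal.tsum_mul_left, ← ENNReal.tsum_mul_left]
    refine ENNReal.tsum_le_tsum fun f => ?_
    rw [mul_ite, mul_ite, mul_zero, mul_zero]
    split_ifs with hfk
    · have key : ((k.factorial : ℝ) / M k) * ∏ i, (‖D^[f i + 1] (↑a : A)‖ / ((f i + 1).factorial : ℝ))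
          ≤ σ m * ∏ i, (‖D^[f i + 1] (↑a : A)‖ / M (f i + 1)) := by
        have hsplit : ∀ i : Fin m, ‖D^[f i + 1] (↑a : A)‖ / ((f i + 1).factorial : ℝ)
            = (M (f i + 1) / ((f i + 1).factorial : ℝ)) * (‖D^[f i + 1] (↑a : A)‖ / M (f i + 1)) := by
          intro i
          exact nci_div_split _ _ _ (ne_of_gt (hfac (f i + 1))) (ne_of_gt (hMpos (f i + 1)))
        calc ((k.factorial : ℝ) / M k) * ∏ i, (‖D^[f i + 1] (↑a : A)‖ / ((f i + 1).factorial : ℝ))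
            = (((k.factorial : ℝ) / M k) * ∏ i, (M (f i + 1) / ((f i + 1).factorial : ℝ)))
                * ∏ i, (‖D^[f i + 1] (↑a : A)‖ / M (f i + 1)) := by
              rw [Finset.prod_congr rfl fun i _ => hsplit i, Finset.prod_mul_distrib]
              ring
          _ ≤ σ m * ∏ i, (‖D^[f i + 1] (↑a : A)‖ / M (f i + 1)) := by
              refine mul_le_mul_of_nonneg_right ?_
                (Finset.prod_nonneg fun i _ => by
                  have := hMpos (f i + 1); positivity)
              rw [← hfk]
              exact hσ_ge m f
      calc ENNReal.ofReal ((k.factorial : ℝ) / M k) * ∏ i, u (f i)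
          = ENNReal.ofReal (((k.factorial : ℝ) / M k)
              * ∏ i, (‖D^[f i + 1] (↑a : A)‖ / ((f i + 1).factorial : ℝ))) := by
            rw [ENNReal.ofReal_mul (by have := hMpos k; have := hfac k; positivity),
              nci_ofReal_prod _ _ fun i _ => by positivity]
        _ ≤ ENNReal.ofReal (σ m * ∏ i, (‖D^[f i + 1] (↑a : A)‖ / M (f i + 1))) :=
            ENNReal.ofReal_le_ofReal key
        _ = ENNReal.ofReal (σ m) * ∏ i, v (f i) := by
            rw [ENNReal.ofReal_mul (hσ0 m),
              nci_ofReal_prod _ _ fun i _ => by have := hMpos (f i + 1); positivity]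
    · exact le_rfl
  -- Am power identity
  have hAmpow : ∀ m : ℕ, Am (m + 1) ^ (m + 1) = σ (m + 1) := by
    intro m
    have h0 := hσ0 (m + 1)
    simp only [hσdef] at h0 ⊢
    rw [hAm (m + 1) (by omega)]
    have hne : (((m + 1 : ℕ)) : ℝ) ≠ 0 := Nat.cast_ne_zero.mpr (by omega)
    rw [← Real.rpow_natCast (_ ^ ((1 : ℝ) / ((m + 1 : ℕ) : ℝ))) (m + 1),
      ← Real.rpow_mul h0, one_div, inv_mul_cancel₀ hne, Real.rpow_one]
  -- per-k tail bound
  have htail : ∀ k : ℕ, ENNReal.ofReal (‖D^[k + 1] (↑a⁻¹ : A)‖ / M (k + 1))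
      ≤ ∑' m : ℕ, β ^ (m + 2) * (ENNReal.ofReal (σ (m + 1)) * nciT v (m + 1) (k + 1)) := by
    intro k
    have h1 : ENNReal.ofReal (‖D^[k + 1] (↑a⁻¹ : A)‖ / M (k + 1))
        = ENNReal.ofReal (((k + 1).factorial : ℝ) / M (k + 1)) * E (k + 1) := by
      rw [hE]
      dsimp only
      rw [← ENNReal.ofReal_mul (le_of_lt (div_pos (hfac _) (hMpos _)))]
      congr 1
      exact nci_div_split _ _ _ (hMpos (k + 1)).ne' (hfac (k + 1)).ne'
    rw [h1]
    calc ENNReal.ofReal (((k + 1).factorial : ℝ) / M (k + 1)) * E (k + 1)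
        ≤ ENNReal.ofReal (((k + 1).factorial : ℝ) / M (k + 1))
            * ∑' m : ℕ, β ^ (m + 2) * nciT u (m + 1) (k + 1) :=
          mul_le_mul_right (hmain (k + 1) (by omega)) _
      _ = ∑' m : ℕ, β ^ (m + 2)
            * (ENNReal.ofReal (((k + 1).factorial : ℝ) / M (k + 1)) * nciT u (m + 1) (k + 1)) := by
          rw [← ENNReal.tsum_mul_left]
          exact tsum_congr fun m => by ring
      _ ≤ ∑' m : ℕ, β ^ (m + 2) * (ENNReal.ofReal (σ (m + 1)) * nciT v (m + 1) (k + 1)) :=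
          ENNReal.tsum_le_tsum fun m => mul_le_mul_right (hcomp (m + 1) (k + 1)) _
  -- global assembly
  rw [tsum_eq_zero_add' (f := fun k => ENNReal.ofReal (‖D^[k] (↑a⁻¹ : A)‖ / M k))
    ENNReal.summable]
  refine add_le_add (le_of_eq ?_) ?_
  · simp [hM0, hβ]
  · calc ∑' k : ℕ, ENNReal.ofReal (‖D^[k + 1] (↑a⁻¹ : A)‖ / M (k + 1))
        ≤ ∑' (k : ℕ) (m : ℕ), β ^ (m + 2)
            * (ENNReal.ofReal (σ (m + 1)) * nciT v (m + 1) (k + 1)) :=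
          ENNReal.tsum_le_tsum htail
      _ = ∑' (m : ℕ) (k : ℕ), β ^ (m + 2)
            * (ENNReal.ofReal (σ (m + 1)) * nciT v (m + 1) (k + 1)) := ENNReal.tsum_comm
      _ = ∑' m : ℕ, β ^ (m + 2)
            * (ENNReal.ofReal (σ (m + 1)) * ∑' k : ℕ, nciT v (m + 1) (k + 1)) := by
          refine tsum_congr fun m => ?_
          rw [ENNReal.tsum_mul_left, ENNReal.tsum_mul_left]
      _ ≤ ∑' m : ℕ, β ^ (m + 2) * (ENNReal.ofReal (σ (m + 1)) * S ^ (m + 1)) := by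
          refine ENNReal.tsum_le_tsum fun m => mul_le_mul_right (mul_le_mul_right ?_ _) _
          calc ∑' k : ℕ, nciT v (m + 1) (k + 1)
              ≤ ∑' k : ℕ, nciT v (m + 1) k :=
                ENNReal.tsum_comp_le_tsum_of_injective
                  (fun x y h => by simpa using h : Function.Injective fun k : ℕ => k + 1) _
            _ = (∑' j : ℕ, v j) ^ (m + 1) := nciT_total v (m + 1)
            _ = S ^ (m + 1) := by rw [hS]
      _ = ∑' m : ℕ, ENNReal.ofReal (‖(↑a⁻¹ : A)‖ ^ (m + 2) * Am (m + 1) ^ (m + 1))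
            * S ^ (m + 1) := by
          refine tsum_congr fun m => ?_
          rw [hAmpow m, ENNReal.ofReal_mul (by positivity),
            ENNReal.ofReal_pow (norm_nonneg _), ← hβ, mul_assoc]
end

section
/- Let r > 0 and define v_r(x) = Σ_{k=0}^{∞} x^k/(k!)^r for x ≥ 0. Then for every ε > 0 there exists X > 0 such that v_r(x) < exp((r+ε)·x^{1/r}) for all x > X. -/
open Real Finset

private lemma aux_pow_div_factorial_le_exp (y : ℝ) (hy : 0 ≤ y) (k : ℕ) :
    y ^ k / (k.factorial : ℝ) ≤ Real.exp y := by
  have h : ∀ i ∈ range (k + 1), (0:ℝ) ≤ y ^ i / i.factorial := fun i _ => by positivity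
  calc y ^ k / (k.factorial : ℝ)
      ≤ ∑ i ∈ range (k + 1), y ^ i / (i.factorial : ℝ) :=
        Finset.single_le_sum h (Finset.self_mem_range_succ k)
    _ ≤ Real.exp y := Real.sum_le_exp_of_nonneg hy _

private lemma aux_final (ε D y : ℝ) (hε : 0 < ε) (hD0 : 0 < D) (hy1 : 1 < y)
    (h4 : 4 * (3 + D) < ε ^ 2 * y) : 2 * y + 1 + D < Real.exp (ε * y) := by
  have hy0 : 0 < y := lt_trans one_pos hy1
  have hquad : (1 + ε * y / 2) ^ 2 ≤ Real.exp (ε * y) := by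
    have h1 : Real.exp (ε * y) = Real.exp (ε * y / 2) ^ 2 := by
      rw [← Real.exp_nat_mul]; ring_nf
    rw [h1]
    have h2 := Real.add_one_le_exp (ε * y / 2)
    have h3 : (0:ℝ) ≤ 1 + ε * y / 2 := by positivity
    exact pow_le_pow_left₀ h3 (by linarith) 2
  have h5 : 4 * (3 + D) * y < ε ^ 2 * y * y :=
    mul_lt_mul_of_pos_right h4 hy0
  have h6 : 2 * y + 1 + D ≤ (3 + D) * y := by nlinarith
  nlinarith [hquad, h5, h6, mul_pos hε hy0]

/-- **Growth of the subexponential weight `v_r`.**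
Let `r > 0` and `v_r(x) = Σ_{k≥0} x^k/(k!)^r` for `x ≥ 0`. Then for every `ε > 0`
there exists `X > 0` such that `v_r(x) < exp((r+ε)·x^{1/r})` for all `x > X`. -/
theorem subexponential_weight_growth (r : ℝ) (hr : 0 < r) (ε : ℝ) (hε : 0 < ε) :
    ∃ X : ℝ, 0 < X ∧ ∀ x : ℝ, X < x →
      (∑' k : ℕ, x ^ k / (k.factorial : ℝ) ^ r) <
        Real.exp ((r + ε) * x ^ (1 / r)) := by
  -- the geometric ratio
  set w : ℝ := (1 / 2 : ℝ) ^ r with hw_def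
  have hw0 : 0 < w := Real.rpow_pos_of_pos (by norm_num) r
  have hw1 : w < 1 := Real.rpow_lt_one (by norm_num) (by norm_num) hr
  set D : ℝ := (1 - w)⁻¹ with hD_def
  have hD0 : 0 < D := inv_pos.mpr (by linarith)
  -- threshold in the `y` variable
  set Y : ℝ := max 1 (4 * (3 + D) / ε ^ 2) with hY_def
  have hY1 : 1 ≤ Y := le_max_left _ _
  have hY0 : 0 < Y := lt_of_lt_of_le one_pos hY1
  refine ⟨Y ^ r, Real.rpow_pos_of_pos hY0 r, fun x hx => ?_⟩
  have hX0 : (0:ℝ) < Y ^ r := Real.rpow_pos_of_pos hY0 r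
  have hx0 : 0 < x := lt_trans hX0 hx
  set y : ℝ := x ^ (1 / r) with hy_def
  have hy0 : 0 < y := Real.rpow_pos_of_pos hx0 _
  have hyY : Y < y := by
    have h := Real.rpow_lt_rpow hX0.le hx (by positivity : (0:ℝ) < 1/r)
    rw [one_div, Real.rpow_rpow_inv hY0.le hr.ne'] at h
    show Y < x ^ (1 / r)
    rwa [one_div]
  have hy1 : 1 < y := lt_of_le_of_lt hY1 hyY
  have hxy : x = y ^ r := by
    rw [hy_def, one_div, Real.rpow_inv_rpow hx0.le hr.ne']
  -- rewrite the terms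
  have hterm : ∀ k : ℕ, x ^ k / (k.factorial : ℝ) ^ r
      = (y ^ k / (k.factorial : ℝ)) ^ r := by
    intro k
    rw [hxy, ← Real.rpow_natCast (y ^ r) k, ← Real.rpow_mul hy0.le,
      mul_comm r (k:ℝ), Real.rpow_natCast_mul hy0.le,
      Real.div_rpow (by positivity) (k.factorial.cast_nonneg)]
  -- every term is at most exp (r*y)
  have hterm_le : ∀ k : ℕ, x ^ k / (k.factorial : ℝ) ^ r ≤ Real.exp (r * y) := by
    intro k
    rw [hterm k, mul_comm, Real.exp_mul]
    exact Real.rpow_le_rpow (by positivity) (aux_pow_div_factorial_le_exp y hy0.le k) hr.le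
  set K : ℕ := ⌈2 * y⌉₊ with hK_def
  have hK_ge : 2 * y ≤ (K : ℝ) := Nat.le_ceil _
  have hK_lt : (K : ℝ) < 2 * y + 1 := Nat.ceil_lt_add_one (by positivity)
  have hK0 : 0 < (K : ℝ) := lt_of_lt_of_le (by linarith) hK_ge
  -- factorial descent bound
  have hdesc : ∀ j : ℕ, y ^ (K + j) / ((K + j).factorial : ℝ)
      ≤ (y ^ K / (K.factorial : ℝ)) * (y / K) ^ j := by
    intro j
    induction j with
    | zero => simp
    | succ j ih =>
      have hfac : ((K + (j+1)).factorial : ℝ)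
          = ((K + j).factorial : ℝ) * (K + j + 1) := by
        have : K + (j + 1) = (K + j) + 1 := by ring
        rw [this, Nat.factorial_succ]
        push_cast; ring
      have hKj : (0:ℝ) < ((K+j).factorial : ℝ) := by positivity
      have he : K + (j+1) = (K+j) + 1 := rfl
      have hstep : y ^ (K + (j+1)) / ((K + (j+1)).factorial : ℝ)
          = (y ^ (K + j) / ((K + j).factorial : ℝ)) * (y / ((K:ℝ) + j + 1)) := by
        rw [hfac, he, pow_succ, div_mul_div_comm]
      rw [hstep, pow_succ, ← mul_assoc]
      apply mul_le_mul ih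
      · apply div_le_div_of_nonneg_left hy0.le hK0
        have : (0:ℝ) ≤ (j:ℝ) + 1 := by positivity
        linarith
      · positivity
      · positivity
  have hhalf : y / K ≤ 1 / 2 := by
    rw [div_le_div_iff₀ hK0 (by norm_num)]
    linarith
  -- tail term bound
  have htail : ∀ j : ℕ, x ^ (j + K) / ((j + K).factorial : ℝ) ^ r
      ≤ Real.exp (r * y) * w ^ j := by
    intro j
    rw [hterm (j + K)]
    have h1 : y ^ (j + K) / ((j + K).factorial : ℝ) ≤ Real.exp y * (1/2) ^ j := by
      have := hdesc j
      rw [add_comm j K]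
      refine le_trans this ?_
      apply mul_le_mul (aux_pow_div_factorial_le_exp y hy0.le K)
        (pow_le_pow_left₀ (by positivity) hhalf j) (by positivity) (Real.exp_pos y).le
    calc (y ^ (j + K) / ((j + K).factorial : ℝ)) ^ r
        ≤ (Real.exp y * (1/2) ^ j) ^ r :=
          Real.rpow_le_rpow (by positivity) h1 hr.le
      _ = Real.exp (r * y) * w ^ j := by
          rw [Real.mul_rpow (Real.exp_pos y).le (by positivity),
            ← Real.exp_mul, mul_comm y r,
            ← Real.rpow_natCast_mul (by norm_num : (0:ℝ) ≤ 1/2),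
            mul_comm (j:ℝ) r, Real.rpow_mul (by norm_num : (0:ℝ) ≤ 1/2),
            Real.rpow_natCast]
  have hgeo : Summable fun j : ℕ => Real.exp (r * y) * w ^ j :=
    (summable_geometric_of_lt_one hw0.le hw1).mul_left _
  have hsum_shift : Summable fun j : ℕ => x ^ (j + K) / ((j + K).factorial : ℝ) ^ r := by
    apply Summable.of_nonneg_of_le (fun j => by positivity) htail hgeo
  have hsummable : Summable fun k : ℕ => x ^ k / (k.factorial : ℝ) ^ r :=
    (summable_nat_add_iff K).mp hsum_shift
  -- split the sum
  have hsplit := Summable.sum_add_tsum_nat_add K hsummable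
  have hhead : ∑ k ∈ range K, x ^ k / (k.factorial : ℝ) ^ r ≤ K * Real.exp (r * y) := by
    calc ∑ k ∈ range K, x ^ k / (k.factorial : ℝ) ^ r
        ≤ ∑ _k ∈ range K, Real.exp (r * y) := Finset.sum_le_sum fun k _ => hterm_le k
      _ = K * Real.exp (r * y) := by rw [Finset.sum_const, card_range, nsmul_eq_mul]
  have htailsum : (∑' j : ℕ, x ^ (j + K) / ((j + K).factorial : ℝ) ^ r)
      ≤ Real.exp (r * y) * D := by
    calc (∑' j : ℕ, x ^ (j + K) / ((j + K).factorial : ℝ) ^ r)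
        ≤ ∑' j : ℕ, Real.exp (r * y) * w ^ j := Summable.tsum_le_tsum htail hsum_shift hgeo
      _ = Real.exp (r * y) * D := by
          rw [tsum_mul_left, tsum_geometric_of_lt_one hw0.le hw1]
  have hbound : (∑' k : ℕ, x ^ k / (k.factorial : ℝ) ^ r)
      ≤ (2 * y + 1 + D) * Real.exp (r * y) := by
    rw [← hsplit]
    have : (K:ℝ) * Real.exp (r * y) + Real.exp (r * y) * D
        ≤ (2 * y + 1 + D) * Real.exp (r * y) := by
      have h := (Real.exp_pos (r * y)).le
      nlinarith [Real.exp_pos (r * y)]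
    linarith [hhead, htailsum]
  -- final comparison with the exponential
  have hfinal : 2 * y + 1 + D < Real.exp (ε * y) := by
    apply aux_final ε D y hε hD0 hy1
    have hYy2 : 4 * (3 + D) / ε ^ 2 < y := lt_of_le_of_lt (le_max_right _ _) hyY
    rw [div_lt_iff₀ (by positivity)] at hYy2; linarith
  calc (∑' k : ℕ, x ^ k / (k.factorial : ℝ) ^ r)
      ≤ (2 * y + 1 + D) * Real.exp (r * y) := hbound
    _ < Real.exp (ε * y) * Real.exp (r * y) :=
        mul_lt_mul_of_pos_right hfinal (Real.exp_pos _)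
    _ = Real.exp ((r + ε) * y) := by rw [← Real.exp_add]; ring_nf
end

section
/- Let γ > 0 and let C_γ be the bounded operator on ℓ²(ℤ) defined by (C_γ x)(n) = x(n) − e^{−γ}·x(n−1). Then C_γ is invertible, the matrix of its inverse is C_γ⁻¹(k,l) = e^{−γ(k−l)} for k ≥ l and C_γ⁻¹(k,l) = 0 for k < l, and consequently, for every r ≥ 0, the matrix norms satisfy ‖C_γ‖_{C_r} = 1 + 2^r·e^{−γ} and ‖C_γ⁻¹‖_{C_r} = Σ_{k=0}^{∞} (1+k)^r·e^{−γk} (a convergent series), where ‖A‖_{C_r} = Σ_{k∈ℤ} ( sup_{l∈ℤ} |A(l, l−k)| )·(1+|k|)^r. -/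
open scoped ENNReal

noncomputable section ToeplitzAux

private abbrev ℓ2 := lp (fun _ : ℤ => ℂ) 2

private lemma h2 : 0 < (2 : ℝ≥0∞).toReal := by norm_num

private lemma memℓp_shift (x : ℓ2) : Memℓp (fun n : ℤ => x (n - 1)) 2 := by
  have hx := lp.memℓp x
  rw [memℓp_gen_iff h2] at hx ⊢
  exact ((Equiv.subRight (1:ℤ)).summable_iff
    (f := fun i => ‖x i‖ ^ (2 : ℝ≥0∞).toReal)).2 hx

private def shiftL : ℓ2 →ₗ[ℂ] ℓ2 where
  toFun x := ⟨fun n => x (n - 1), memℓp_shift x⟩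
  map_add' _ _ := lp.ext (funext fun _ => rfl)
  map_smul' _ _ := lp.ext (funext fun _ => rfl)

private lemma shiftL_norm (x : ℓ2) : ‖shiftL x‖ = ‖x‖ := by
  rw [lp.norm_eq_tsum_rpow h2, lp.norm_eq_tsum_rpow h2]
  congr 1
  exact (Equiv.subRight (1:ℤ)).tsum_eq (fun i => ‖x i‖ ^ (2 : ℝ≥0∞).toReal)

private def T1 : ℓ2 →L[ℂ] ℓ2 :=
  shiftL.mkContinuous 1 (fun x => by rw [shiftL_norm, one_mul])

private lemma T1_apply (x : ℓ2) (n : ℤ) : (T1 x : ∀ _ : ℤ, ℂ) n = x (n - 1) := rfl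

private lemma T1_norm_le : ‖T1‖ ≤ 1 :=
  LinearMap.mkContinuous_norm_le _ zero_le_one _

private lemma T1_pow_apply : ∀ (n : ℕ) (x : ℓ2) (m : ℤ),
    ((T1 ^ n) x : ∀ _ : ℤ, ℂ) m = x (m - n) := by
  intro n
  induction n with
  | zero => intro x m; simp
  | succ n ih =>
    intro x m
    rw [pow_succ, ContinuousLinearMap.mul_apply, ih, T1_apply]
    congr 1
    push_cast
    ring

private def evalCLM (k : ℤ) : ℓ2 →L[ℂ] ℂ :=
  LinearMap.mkContinuous
    { toFun := fun x => x k, map_add' := fun _ _ => rfl, map_smul' := fun _ _ => rfl }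
    1 (fun x => by rw [one_mul]; exact lp.norm_apply_le_norm (by norm_num) x k)

private lemma evalCLM_apply (k : ℤ) (x : ℓ2) : evalCLM k x = x k := rfl

end ToeplitzAux

set_option maxHeartbeats 1000000 in
/-- **The Toeplitz example `C_γ = Id − e^{−γ}T₁`.**
Let `γ > 0` and let `C_γ` be the bounded operator on `ℓ²(ℤ)` given by
`(C_γ x)(n) = x(n) − e^{−γ}·x(n−1)`. Then `C_γ` is invertible, the matrix of its
inverse is `C_γ⁻¹(k,l) = e^{−γ(k−l)}` for `k ≥ l` and `0` for `k < l`, and for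
every `r ≥ 0` the matrix norms `‖A‖_{C_r} = Σ_{k∈ℤ}(sup_l |A(l,l−k)|)(1+|k|)^r`
satisfy `‖C_γ‖_{C_r} = 1 + 2^r·e^{−γ}` and
`‖C_γ⁻¹‖_{C_r} = Σ_{k=0}^{∞} (1+k)^r·e^{−γk}`, a convergent series. -/
theorem toeplitz_example (γ : ℝ) (hγ : 0 < γ)
    (T : lp (fun _ : ℤ => ℂ) 2 →L[ℂ] lp (fun _ : ℤ => ℂ) 2)
    (hT : ∀ (x : lp (fun _ : ℤ => ℂ) 2) (n : ℤ),
      (T x) n = x n - (Real.exp (-γ) : ℂ) * x (n - 1)) :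
    ∃ e : lp (fun _ : ℤ => ℂ) 2 ≃L[ℂ] lp (fun _ : ℤ => ℂ) 2,
      (e : lp (fun _ : ℤ => ℂ) 2 →L[ℂ] lp (fun _ : ℤ => ℂ) 2) = T ∧
      (∀ k l : ℤ, (e.symm (lp.single 2 l 1) : ∀ _ : ℤ, ℂ) k =
          if l ≤ k then (Real.exp (-γ * ((k : ℝ) - (l : ℝ))) : ℂ) else 0) ∧
      ∀ r : ℝ, 0 ≤ r →
        (∑' k : ℤ, (⨆ l : ℤ,
            (‖(T (lp.single 2 (l - k) 1) : ∀ _ : ℤ, ℂ) l‖₊ : ℝ≥0∞)) *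
          ENNReal.ofReal ((1 + |(k : ℝ)|) ^ r))
            = ENNReal.ofReal (1 + (2 : ℝ) ^ r * Real.exp (-γ)) ∧
        Summable (fun k : ℕ => (1 + (k : ℝ)) ^ r * Real.exp (-γ * (k : ℝ))) ∧
        (∑' k : ℤ, (⨆ l : ℤ,
            (‖(e.symm (lp.single 2 (l - k) 1) : ∀ _ : ℤ, ℂ) l‖₊ : ℝ≥0∞)) *
          ENNReal.ofReal ((1 + |(k : ℝ)|) ^ r))
            = ENNReal.ofReal
                (∑' k : ℕ, (1 + (k : ℝ)) ^ r * Real.exp (-γ * (k : ℝ))) := by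
  set c : ℝ := Real.exp (-γ) with hc
  have hc0 : 0 < c := Real.exp_pos _
  have hc1 : c < 1 := by
    calc c = Real.exp (-γ) := hc
    _ < Real.exp 0 := Real.exp_lt_exp.2 (by linarith)
    _ = 1 := Real.exp_zero
  set A : ℓ2 →L[ℂ] ℓ2 := (c : ℂ) • T1 with hA
  have hAnorm : ‖A‖ < 1 := by
    have h1 : ‖A‖ ≤ c * ‖T1‖ := by
      have h2 := ContinuousLinearMap.opNorm_smul_le ((c : ℂ)) T1
      rwa [Complex.norm_real, Real.norm_eq_abs, abs_of_pos hc0] at h2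
    nlinarith [norm_nonneg T1, T1_norm_le]
  have hsum : Summable (fun n : ℕ => A ^ n) := summable_geometric_of_norm_lt_one hAnorm
  set u : (ℓ2 →L[ℂ] ℓ2)ˣ := Units.oneSub A hAnorm with hu
  set e : ℓ2 ≃L[ℂ] ℓ2 := ContinuousLinearEquiv.ofUnit u with he
  have hTeq : (e : ℓ2 →L[ℂ] ℓ2) = T := by
    refine ContinuousLinearMap.ext fun x => lp.ext (funext fun n => ?_)
    have h1 : (e : ℓ2 →L[ℂ] ℓ2) x = x - A x := by
      show ((1 - A) x) = x - A x
      rw [ContinuousLinearMap.sub_apply, ContinuousLinearMap.one_apply]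
    rw [h1, hT]
    have h2 : ((x - A x : ℓ2) : ∀ _ : ℤ, ℂ) n = x n - (A x) n := by
      rw [lp.coeFn_sub]; rfl
    rw [h2, hA]
    have h3 : (((c : ℂ) • T1) x : ∀ _ : ℤ, ℂ) n = (c : ℂ) * x (n - 1) := by
      rw [ContinuousLinearMap.smul_apply, lp.coeFn_smul, Pi.smul_apply, smul_eq_mul, T1_apply]
    rw [h3]
  -- the inverse's coordinates
  have hAn : ∀ (n : ℕ) (y : ℓ2) (m : ℤ),
      ((A ^ n) y : ∀ _ : ℤ, ℂ) m = (c : ℂ) ^ n * y (m - n) := by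
    intro n y m
    rw [hA, smul_pow, ContinuousLinearMap.smul_apply, lp.coeFn_smul, Pi.smul_apply,
      smul_eq_mul, T1_pow_apply]
  have key : ∀ k l : ℤ, (e.symm (lp.single 2 l 1) : ∀ _ : ℤ, ℂ) k
      = ∑' n : ℕ, (c : ℂ) ^ n * (lp.single 2 l (1 : ℂ) : ∀ _ : ℤ, ℂ) (k - n) := by
    intro k l
    have h3 := ContinuousLinearMap.map_tsum
      ((evalCLM k).comp ((ContinuousLinearMap.apply ℂ ℓ2) (lp.single 2 l 1))) hsum
    simp only [ContinuousLinearMap.comp_apply, ContinuousLinearMap.apply_apply] at h3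
    calc (e.symm (lp.single 2 l 1) : ∀ _ : ℤ, ℂ) k
        = evalCLM k ((∑' n : ℕ, A ^ n) (lp.single 2 l 1)) := rfl
    _ = ∑' n : ℕ, evalCLM k ((A ^ n) (lp.single 2 l 1)) := h3
    _ = ∑' n : ℕ, (c : ℂ) ^ n * (lp.single 2 l (1 : ℂ) : ∀ _ : ℤ, ℂ) (k - n) := by
        exact tsum_congr fun n => hAn n _ k
  have hinv : ∀ k l : ℤ, (e.symm (lp.single 2 l 1) : ∀ _ : ℤ, ℂ) k =
      if l ≤ k then (Real.exp (-γ * ((k : ℝ) - (l : ℝ))) : ℂ) else 0 := by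
    intro k l
    rw [key k l]
    by_cases hlk : l ≤ k
    · rw [if_pos hlk]
      have hn0 : ((k - l).toNat : ℤ) = k - l := Int.toNat_of_nonneg (by omega)
      rw [tsum_eq_single (k - l).toNat ?_]
      · have hidx : k - ((k - l).toNat : ℤ) = l := by omega
        rw [hidx, lp.single_apply_self, mul_one]
        have hr : (((k - l).toNat : ℕ) : ℝ) = (k : ℝ) - (l : ℝ) := by
          exact_mod_cast congrArg (Int.cast : ℤ → ℝ) hn0
        have hval : c ^ (k - l).toNat = Real.exp (-γ * ((k : ℝ) - (l : ℝ))) := by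
          rw [hc, ← Real.exp_nat_mul, hr]
          ring_nf
        rw [← hval]
        push_cast
        ring
      · intro n hn
        rw [lp.single_apply_ne _ _ _ (by omega : k - (n : ℤ) ≠ l), mul_zero]
    · rw [if_neg hlk]
      have hz : ∀ n : ℕ, (c : ℂ) ^ n * (lp.single 2 l (1 : ℂ) : ∀ _ : ℤ, ℂ) (k - n) = 0 := by
        intro n
        rw [lp.single_apply_ne _ _ _ (by omega : k - (n : ℤ) ≠ l), mul_zero]
      rw [tsum_congr hz, tsum_zero]
  refine ⟨e, hTeq, hinv, fun r hr => ?_⟩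
  -- part 3b : summability
  have hsummable : Summable (fun k : ℕ => (1 + (k : ℝ)) ^ r * Real.exp (-γ * (k : ℝ))) := by
    set m := ⌈r⌉₊ with hm
    have h1 : Summable (fun n : ℕ => (n : ℝ) ^ m * c ^ n) :=
      summable_pow_mul_geometric_of_norm_lt_one m
        (by rw [Real.norm_eq_abs, abs_of_pos hc0]; exact hc1)
    have h2 : Summable (fun n : ℕ => ((n + 1 : ℕ) : ℝ) ^ m * c ^ (n + 1)) :=
      (_root_.summable_nat_add_iff 1).2 h1
    have h3 := h2.mul_left c⁻¹
    refine Summable.of_nonneg_of_le (fun k => by positivity) (fun k => ?_) h3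
    have e1 : Real.exp (-γ * (k : ℝ)) = c ^ k := by
      rw [hc, show -γ * (k : ℝ) = (k : ℝ) * -γ by ring, Real.exp_nat_mul]
    have e2 : (1 + (k : ℝ)) ^ r ≤ (1 + (k : ℝ)) ^ (m : ℝ) :=
      Real.rpow_le_rpow_of_exponent_le (by push_cast; linarith [Nat.cast_nonneg (α := ℝ) k])
        (Nat.le_ceil r)
    rw [e1]
    calc (1 + (k : ℝ)) ^ r * c ^ k ≤ (1 + (k : ℝ)) ^ (m : ℝ) * c ^ k := by
          exact mul_le_mul_of_nonneg_right e2 (pow_nonneg hc0.le k)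
    _ = c⁻¹ * (((k + 1 : ℕ) : ℝ) ^ m * c ^ (k + 1)) := by
        rw [Real.rpow_natCast]
        push_cast
        rw [pow_succ]
        field_simp
        ring
  refine ⟨?_, hsummable, ?_⟩
  · -- part 3a
    have hTent : ∀ k l : ℤ, (T (lp.single 2 (l - k) 1) : ∀ _ : ℤ, ℂ) l
        = if k = 0 then 1 else if k = 1 then -(c : ℂ) else 0 := by
      intro k l
      rw [hT]
      by_cases h0 : k = 0
      · subst h0
        rw [if_pos rfl, show l - 0 = l by ring, lp.single_apply_self,
          lp.single_apply_ne _ _ _ (by omega : l - 1 ≠ l), mul_zero, sub_zero]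
      · rw [if_neg h0, lp.single_apply_ne _ _ _ (by omega : l ≠ l - k)]
        by_cases h1 : k = 1
        · subst h1
          rw [if_pos rfl, lp.single_apply_self, mul_one, zero_sub]
        · rw [if_neg h1, lp.single_apply_ne _ _ _ (by omega : l - 1 ≠ l - k), mul_zero, sub_zero]
    have hsup : ∀ k : ℤ, (⨆ l : ℤ, (‖(T (lp.single 2 (l - k) 1) : ∀ _ : ℤ, ℂ) l‖₊ : ℝ≥0∞))
        = if k = 0 then 1 else if k = 1 then ENNReal.ofReal c else 0 := by
      intro k
      have hconst : ∀ l : ℤ, (‖(T (lp.single 2 (l - k) 1) : ∀ _ : ℤ, ℂ) l‖₊ : ℝ≥0∞)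
          = if k = 0 then 1 else if k = 1 then ENNReal.ofReal c else 0 := by
        intro l
        rw [hTent k l]
        split_ifs
        · simp
        · rw [← enorm_eq_nnnorm, ← ofReal_norm, norm_neg, Complex.norm_real, Real.norm_eq_abs,
            abs_of_pos hc0]
        · simp
      simp only [hconst]
      exact iSup_const
    calc (∑' k : ℤ, (⨆ l : ℤ, (‖(T (lp.single 2 (l - k) 1) : ∀ _ : ℤ, ℂ) l‖₊ : ℝ≥0∞)) *
          ENNReal.ofReal ((1 + |(k : ℝ)|) ^ r))
        = ∑' k : ℤ, (if k = 0 then 1 else if k = 1 then ENNReal.ofReal c else 0) *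
          ENNReal.ofReal ((1 + |(k : ℝ)|) ^ r) := tsum_congr fun k => by rw [hsup k]
    _ = ∑ k ∈ ({0, 1} : Finset ℤ), (if k = 0 then 1 else if k = 1 then ENNReal.ofReal c else 0) *
          ENNReal.ofReal ((1 + |(k : ℝ)|) ^ r) := by
        refine tsum_eq_sum fun k hk => ?_
        simp only [Finset.mem_insert, Finset.mem_singleton] at hk
        push_neg at hk
        rw [if_neg hk.1, if_neg hk.2, zero_mul]
    _ = ENNReal.ofReal (1 + (2 : ℝ) ^ r * c) := by
        rw [Finset.sum_pair (by norm_num : (0 : ℤ) ≠ 1)]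
        norm_num
        rw [← ENNReal.ofReal_mul hc0.le, ← ENNReal.ofReal_one,
          ← ENNReal.ofReal_add zero_le_one (by positivity)]
        congr 1
        ring
  · -- part 3c
    have hent2 : ∀ k l : ℤ, (e.symm (lp.single 2 (l - k) 1) : ∀ _ : ℤ, ℂ) l
        = if 0 ≤ k then ((Real.exp (-γ * (k : ℝ)) : ℝ) : ℂ) else 0 := by
      intro k l
      rw [hinv l (l - k)]
      by_cases hk : 0 ≤ k
      · rw [if_pos (by omega : l - k ≤ l), if_pos hk]
        congr 2
        push_cast
        ring
      · rw [if_neg (by omega : ¬ l - k ≤ l), if_neg hk]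
    have hsup2 : ∀ k : ℤ, (⨆ l : ℤ, (‖(e.symm (lp.single 2 (l - k) 1) : ∀ _ : ℤ, ℂ) l‖₊ : ℝ≥0∞))
        = if 0 ≤ k then ENNReal.ofReal (Real.exp (-γ * (k : ℝ))) else 0 := by
      intro k
      have hconst : ∀ l : ℤ, (‖(e.symm (lp.single 2 (l - k) 1) : ∀ _ : ℤ, ℂ) l‖₊ : ℝ≥0∞)
          = if 0 ≤ k then ENNReal.ofReal (Real.exp (-γ * (k : ℝ))) else 0 := by
        intro l
        rw [hent2 k l]
        split_ifs
        · rw [← enorm_eq_nnnorm, ← ofReal_norm, Complex.norm_real, Real.norm_eq_abs,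
            abs_of_pos (Real.exp_pos _)]
        · simp
      simp only [hconst]
      exact iSup_const
    calc (∑' k : ℤ, (⨆ l : ℤ, (‖(e.symm (lp.single 2 (l - k) 1) : ∀ _ : ℤ, ℂ) l‖₊ : ℝ≥0∞)) *
          ENNReal.ofReal ((1 + |(k : ℝ)|) ^ r))
        = ∑' k : ℤ, (if 0 ≤ k then ENNReal.ofReal (Real.exp (-γ * (k : ℝ))) else 0) *
          ENNReal.ofReal ((1 + |(k : ℝ)|) ^ r) := tsum_congr fun k => by rw [hsup2 k]
    _ = ∑' n : ℕ, (if 0 ≤ ((n : ℤ)) then ENNReal.ofReal (Real.exp (-γ * ((n : ℤ) : ℝ))) else 0) *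
          ENNReal.ofReal ((1 + |((n : ℤ) : ℝ)|) ^ r) := by
        refine (Function.Injective.tsum_eq (fun a b h => by exact_mod_cast h) ?_).symm
        intro k hk
        simp only [Function.mem_support] at hk
        rcases le_or_gt 0 k with h | h
        · exact ⟨k.toNat, by omega⟩
        · exact absurd (by rw [if_neg (by omega), zero_mul]) hk
    _ = ∑' n : ℕ, ENNReal.ofReal ((1 + (n : ℝ)) ^ r * Real.exp (-γ * (n : ℝ))) := by
        refine tsum_congr fun n => ?_
        rw [if_pos (Int.natCast_nonneg n)]
        rw [show |((n : ℤ) : ℝ)| = (n : ℝ) by push_cast; exact abs_of_nonneg (Nat.cast_nonneg n)]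
        rw [← ENNReal.ofReal_mul (Real.exp_pos _).le, mul_comm]
        norm_cast
    _ = ENNReal.ofReal (∑' k : ℕ, (1 + (k : ℝ)) ^ r * Real.exp (-γ * (k : ℝ))) :=
        (ENNReal.ofReal_tsum_of_nonneg (fun n => by positivity) hsummable).symm
end
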